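/- arXiv:1011.5691 — 4 statements merged into one kernel-verified Lean document; each statement's English description precedes it below -/
import Mathlib

section
/- Consider the cone percolation process on T_d^+ with radius of influence R. If E[d^R] > 1 + p_0, then the process survives with positive probability: P_+[V] > 0. -/
open MeasureTheory ProbabilityTheory Filter Set
open scoped ENNReal

noncomputable section

/-- Length of the longest common prefix of two lists. -/
def lcpLen {α : Type*} [DecidableEq α] : List α → List α → ℕ
  | a :: as, b :: bs => if a = b then lcpLen as bs + 1 else 0
  | _, _ => 0

/-- Graph distance on the rooted tree `T_d^+`, whose vertices are the finite words
over `Fin d` (every vertex has exactly `d` children); the root `O` is `[]`. -/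
def distPlus {d : ℕ} (u v : List (Fin d)) : ℕ :=
  (u.length - lcpLen u v) + (v.length - lcpLen u v)

/-- Vertices of the homogeneous tree `T_d`, in which every vertex has `d + 1`
neighbours: the origin `O` is `none`; any other vertex is coded by its first step
away from the origin (one of `d + 1` directions) followed by a word over `Fin d`
(after the first step, `d` directions lead away from the origin). -/
abbrev TdVertex (d : ℕ) : Type := Option (Fin (d + 1) × List (Fin d))

/-- Graph distance on the homogeneous tree `T_d`. -/
def distFull {d : ℕ} : TdVertex d → TdVertex d → ℕ
  | none, none => 0
  | none, some (_, l) => l.length + 1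
  | some (_, l), none => l.length + 1
  | some (a, l), some (b, m) =>
      if a = b then (l.length - lcpLen l m) + (m.length - lcpLen l m)
      else (l.length + 1) + (m.length + 1)

/-- The sets `I_n` of the cone percolation process with radii `r` on the tree with
vertex set `V`, graph distance `dist` and origin `o`:  `I_0 = {o}` and
`I_{n+1} = ⋃_{u ∈ I_n} B_u` where `B_u = {w : dist u w ≤ r u}`. -/
def reachSet {V : Type*} (dist : V → V → ℕ) (o : V) (r : V → ℕ) : ℕ → Set V
  | 0 => {o}
  | n + 1 => ⋃ u ∈ reachSet dist o r n, {w | dist u w ≤ r u}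

/-- `I = ⋃_{n ≥ 0} I_n`, the set of vertices that ever hear the rumour. -/
def cluster {V : Type*} (dist : V → V → ℕ) (o : V) (r : V → ℕ) : Set V :=
  ⋃ n, reachSet dist o r n

/-- The survival event `V = {|I| = ∞}`, for radii given by the random field `R`. -/
def survival {V : Type*} {Ω : Type*} (dist : V → V → ℕ) (o : V) (R : V → Ω → ℕ) : Set Ω :=
  {ω | (cluster dist o fun u => R u ω).Infinite}

/-!
From a vertex `u` with `R u = k` the rumour reaches each of the `d ^ k` descendants `u ++ w` with
`w.length = k`. Restricting `k` to a finite set `F` of positive radii, let `Z_n` count the chains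
of `n` such moves from the root. Since `R u` is independent of the radii strictly below `u`,
`E[Z_n] = m ^ n` with `m = ∑_{k ∈ F} d^k p_k`, and `E[d^R] > 1 + p_0` lets us choose `F` with
`m > 1`. Two chains that split at a vertex continue in disjoint subtrees, which gives
`E[Z_{n+1}^2] ≤ m E[Z_n^2] + m₂ m^{2n}` and hence `E[Z_n^2] ≤ C m^{2n}`. The second moment method
yields `P(Z_n ≠ 0) ≥ 1/C` for every `n`, so with probability at least `1/C` infinitely many `Z_n`
are nonzero, and then the cluster contains vertices at every depth.
-/

theorem exists_finset_one_lt_sum_of_one_add_lt_tsum {f : ℕ → ℝ≥0∞} (h₀ : f 0 ≠ ∞)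
    (h : 1 + f 0 < ∑' k, f k) : ∃ F : Finset ℕ, 0 ∉ F ∧ 1 < ∑ k ∈ F, f k := by
  rw [ENNReal.tsum_eq_iSup_sum] at h
  obtain ⟨G, hG⟩ := lt_iSup_iff.mp h
  refine ⟨G.erase 0, Finset.notMem_erase 0 G, ?_⟩
  have hsplit : ∑ k ∈ G, f k ≤ f 0 + ∑ k ∈ G.erase 0, f k := by
    by_cases h0G : 0 ∈ G
    · rw [Finset.add_sum_erase G f h0G]
    · rw [Finset.erase_eq_of_notMem h0G]
      exact le_add_self
  rw [add_comm] at hG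
  exact (ENNReal.add_lt_add_iff_left h₀).mp (hG.trans_le hsplit)

theorem exists_one_le_and_mul_add_le_mul_sq {m m₂ : ℝ≥0∞} (hm : 1 < m) (hm_top : m ≠ ∞)
    (hm₂ : m₂ ≠ ∞) : ∃ C, C ≠ ∞ ∧ 1 ≤ C ∧ m * C + m₂ ≤ C * m ^ 2 := by
  lift m to NNReal using hm_top
  lift m₂ to NNReal using hm₂
  have hm₁ : (1 : ℝ) < m := by exact_mod_cast hm
  have hpos : (0 : ℝ) < m * (m - 1) := by nlinarith
  set c : ℝ := 1 + m₂ / (m * (m - 1))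
  have hc : c * (m * (m - 1)) = m * (m - 1) + m₂ := by
    rw [add_mul, one_mul, div_mul_cancel₀ _ hpos.ne']
  refine ⟨ENNReal.ofReal c, ENNReal.ofReal_ne_top,
    ENNReal.one_le_ofReal.mpr (le_add_of_nonneg_right (by positivity)), ?_⟩
  rw [← ENNReal.ofReal_coe_nnreal (p := m), ← ENNReal.ofReal_coe_nnreal (p := m₂),
    ← ENNReal.ofReal_mul (by positivity), ← ENNReal.ofReal_add (by positivity) (by positivity),
    ← ENNReal.ofReal_pow (by positivity), ← ENNReal.ofReal_mul (by positivity)]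
  exact ENNReal.ofReal_le_ofReal (by nlinarith)

section SecondMoment

variable {Ω : Type*} [MeasurableSpace Ω] {μ : Measure Ω}

theorem sq_lintegral_le_measure_ne_zero_mul_lintegral_sq {f : Ω → ℝ≥0∞} (hf : Measurable f) :
    (∫⁻ ω, f ω ∂μ) ^ 2 ≤ μ {ω | f ω ≠ 0} * ∫⁻ ω, f ω ^ 2 ∂μ := by
  set S := {ω | f ω ≠ 0}
  have hS : MeasurableSet S := hf (measurableSet_singleton 0).compl
  have hsqrt : ∀ x : ℝ≥0∞, (x ^ 2) ^ (2⁻¹ : ℝ) = x := fun x => by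
    simpa using ENNReal.pow_rpow_inv_natCast (n := 2) two_ne_zero x
  have hCS : ∫⁻ ω, f ω ∂μ ≤ (∫⁻ ω, f ω ^ 2 ∂μ) ^ (1 / 2 : ℝ) * μ S ^ (1 / 2 : ℝ) := by
    calc ∫⁻ ω, f ω ∂μ
        = ∫⁻ ω, (f ω ^ 2) ^ (1 / 2 : ℝ) * S.indicator 1 ω ^ (1 / 2 : ℝ) ∂μ := by
          refine lintegral_congr fun ω => ?_
          by_cases hω : f ω = 0
          · simp [hω]
          · simp [S, hω, hsqrt]
      _ ≤ _ := ENNReal.lintegral_mul_norm_pow_le (hf.pow_const 2).aemeasurable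
          (measurable_one.indicator hS).aemeasurable (by norm_num) (by norm_num) (by norm_num)
      _ = (∫⁻ ω, f ω ^ 2 ∂μ) ^ (1 / 2 : ℝ) * μ S ^ (1 / 2 : ℝ) := by
          rw [lintegral_indicator_one hS]
  calc (∫⁻ ω, f ω ∂μ) ^ 2
      ≤ ((∫⁻ ω, f ω ^ 2 ∂μ) ^ (1 / 2 : ℝ) * μ S ^ (1 / 2 : ℝ)) ^ 2 := pow_le_pow_left' hCS 2
    _ = μ S * ∫⁻ ω, f ω ^ 2 ∂μ := by
      have hsq : ∀ x : ℝ≥0∞, (x ^ (1 / 2 : ℝ)) ^ 2 = x := fun x => by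
        simpa using ENNReal.rpow_inv_natCast_pow (n := 2) two_ne_zero x
      rw [mul_pow, hsq, hsq, mul_comm]

theorem inv_le_measure_ne_zero_of_lintegral_sq_le {f : Ω → ℝ≥0∞} (hf : Measurable f)
    {a C : ℝ≥0∞} (ha₀ : a ≠ 0) (ha : a ≠ ∞) (h₁ : ∫⁻ ω, f ω ∂μ = a)
    (h₂ : ∫⁻ ω, f ω ^ 2 ∂μ ≤ C * a ^ 2) :
    C⁻¹ ≤ μ {ω | f ω ≠ 0} := by
  have h : 1 * a ^ 2 ≤ C * μ {ω | f ω ≠ 0} * a ^ 2 := by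
    calc 1 * a ^ 2 = (∫⁻ ω, f ω ∂μ) ^ 2 := by rw [one_mul, h₁]
      _ ≤ μ {ω | f ω ≠ 0} * (C * a ^ 2) :=
        (sq_lintegral_le_measure_ne_zero_mul_lintegral_sq hf).trans (mul_le_mul_right h₂ _)
      _ = C * μ {ω | f ω ≠ 0} * a ^ 2 := by ring
  rw [ENNReal.mul_le_mul_iff_left (pow_ne_zero 2 ha₀) (ENNReal.pow_ne_top ha)] at h
  exact (ENNReal.inv_le_iff_le_mul (fun _ hC => by simp [hC] at h)
    (fun _ hS => by simp [hS] at h)).mpr h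

theorem le_measure_limsup_atTop [IsFiniteMeasure μ] {s : ℕ → Set Ω}
    (hs : ∀ n, MeasurableSet (s n)) {c : ℝ≥0∞} (hc : ∀ n, c ≤ μ (s n)) :
    c ≤ μ (limsup s atTop) := by
  have hanti : Antitone fun n => ⋃ i ≥ n, s i := fun m n hmn =>
    biUnion_subset_biUnion_left fun i (hi : n ≤ i) => hmn.trans hi
  rw [limsup_eq_iInf_iSup_of_nat, iInf_eq_iInter]
  simp only [iSup_eq_iUnion]
  rw [hanti.measure_iInter (fun n => (MeasurableSet.biUnion (to_countable _)
    fun i _ => hs i).nullMeasurableSet) ⟨0, measure_ne_top _ _⟩]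
  exact le_iInf fun n =>
    (hc n).trans (measure_mono (subset_iUnion₂ (s := fun i (_ : i ≥ n) => s i) n le_rfl))

end SecondMoment

section Independence

variable {V Ω β : Type*} [MeasurableSpace β]

abbrev sigmaOn (X : V → Ω → β) (S : Set V) : MeasurableSpace Ω :=
  ⨆ v ∈ S, MeasurableSpace.comap (X v) ‹MeasurableSpace β›

variable {X : V → Ω → β} {S T : Set V}

theorem sigmaOn_mono (h : S ⊆ T) : sigmaOn X S ≤ sigmaOn X T :=
  biSup_mono h

theorem measurable_sigmaOn {v : V} (hv : v ∈ S) : Measurable[sigmaOn X S] (X v) :=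
  Measurable.of_comap_le (le_iSup₂ (f := fun v (_ : v ∈ S) => MeasurableSpace.comap (X v) _) v hv)

theorem measurable_indicator_sigmaOn {v : V} (hv : v ∈ S) (b : β) [MeasurableSingletonClass β] :
    Measurable[sigmaOn X S] ({ω | X v ω = b}.indicator (1 : Ω → ℝ≥0∞)) :=
  (measurable_one.indicator (measurableSet_singleton b)).comp (measurable_sigmaOn hv)

variable [MeasurableSpace Ω]

theorem sigmaOn_le (hX : ∀ v, Measurable (X v)) : sigmaOn X S ≤ ‹MeasurableSpace Ω› :=
  iSup₂_le fun v _ => (hX v).comap_le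

theorem lintegral_mul_eq_mul_lintegral_of_disjoint {P : Measure Ω}
    (hX : ∀ v, Measurable (X v)) (hind : iIndepFun X P) (hST : Disjoint S T)
    {f g : Ω → ℝ≥0∞} (hf : Measurable[sigmaOn X S] f) (hg : Measurable[sigmaOn X T] g) :
    ∫⁻ ω, f ω * g ω ∂P = (∫⁻ ω, f ω ∂P) * ∫⁻ ω, g ω ∂P :=
  lintegral_mul_eq_lintegral_mul_lintegral_of_independent_measurableSpace (sigmaOn_le hX)
    (sigmaOn_le hX) (indep_iSup_of_disjoint (fun v => (hX v).comap_le)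
      ((iIndepFun_iff_iIndep _ _ _).mp hind) hST) hf hg

end Independence

structure IsIIDWithLaw {V Ω : Type*} [MeasurableSpace Ω] (P : Measure Ω) (R : V → Ω → ℕ)
    (p : ℕ → ℝ≥0∞) : Prop where
  measurable : ∀ v, Measurable (R v)
  indep : iIndepFun R P
  law : ∀ v k, P {ω | R v ω = k} = p k

section Tree

variable {α : Type*}

theorem lcpLen_append_right [DecidableEq α] (u w : List α) : lcpLen u (u ++ w) = u.length := by
  induction u with
  | nil => cases w <;> simp [lcpLen]
  | cons a as ih => simp [lcpLen, ih]

theorem distPlus_append_right {d : ℕ} (u w : List (Fin d)) : distPlus u (u ++ w) = w.length := by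
  simp only [distPlus, lcpLen_append_right, List.length_append]
  omega

theorem setOf_append_prefix_subset {u w : List α} (hw : w ≠ []) :
    {x | u ++ w <+: x} ⊆ {x | u <+: x ∧ x ≠ u} := fun x hx => by
  refine ⟨(List.prefix_append u w).trans hx, fun hxu => hw ?_⟩
  have := hx.length_le
  simp_all

theorem disjoint_setOf_append_prefix {u w w' : List α} (hlen : w.length = w'.length)
    (hne : w ≠ w') : Disjoint {x | u ++ w <+: x} {x | u ++ w' <+: x} := by
  refine Set.disjoint_left.mpr fun x hx hx' => hne ?_
  have hlen' : (u ++ w).length = (u ++ w').length := by simp [hlen]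
  exact List.append_cancel_left
    ((List.prefix_of_prefix_length_le hx hx' hlen'.le).eq_of_length hlen')

end Tree

section Cluster

variable {V : Type*} {dist : V → V → ℕ} {o : V} {r : V → ℕ}

theorem mem_cluster_self : o ∈ cluster dist o r :=
  mem_iUnion.mpr ⟨0, rfl⟩

theorem mem_cluster_of_dist_le {u w : V} (hu : u ∈ cluster dist o r) (h : dist u w ≤ r u) :
    w ∈ cluster dist o r := by
  obtain ⟨n, hn⟩ := mem_iUnion.mp hu
  exact mem_iUnion.mpr ⟨n + 1, mem_biUnion hn h⟩

end Cluster

theorem infinite_of_forall_exists_le_length {α : Type*} {s : Set (List α)}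
    (h : ∀ n, ∃ x ∈ s, n ≤ x.length) : s.Infinite :=
  Set.Infinite.of_image List.length <| Set.infinite_of_not_bddAbove fun ⟨b, hb⟩ => by
    obtain ⟨x, hx, hlen⟩ := h (b + 1)
    have := hb (mem_image_of_mem _ hx)
    omega

section ChainCount

variable {d : ℕ} {Ω : Type*} (R : List (Fin d) → Ω → ℕ) (F : Finset ℕ)

/-- The number of chains `u = v₀, v₁, …, vₙ` with `vᵢ₊₁ = vᵢ ++ wᵢ` and
`wᵢ.length = R vᵢ ∈ F`; every `vᵢ₊₁` lies in the ball `B_{vᵢ}`. -/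
def chainCount : ℕ → List (Fin d) → Ω → ℝ≥0∞
  | 0, _ => 1
  | n + 1, u => fun ω => ∑ k ∈ F, {ω | R u ω = k}.indicator 1 ω *
      ∑ w : Fin k → Fin d, chainCount n (u ++ List.ofFn w) ω

variable {R F}

theorem measurable_sigmaOn_chainCount (n : ℕ) (u : List (Fin d)) :
    Measurable[sigmaOn R {x | u <+: x}] (chainCount R F n u) := by
  induction n generalizing u with
  | zero => exact measurable_const
  | succ n ih =>
    refine Finset.measurable_sum _ fun k _ => Measurable.mul ?_ ?_
    · exact measurable_indicator_sigmaOn (v := u) (List.prefix_refl u) k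
    · exact Finset.measurable_sum _ fun w _ =>
        (ih _).mono (sigmaOn_mono fun x hx => (List.prefix_append u _).trans hx) le_rfl

theorem measurable_chainCount [MeasurableSpace Ω] (hR : ∀ v, Measurable (R v)) (n : ℕ)
    (u : List (Fin d)) : Measurable (chainCount R F n u) :=
  (measurable_sigmaOn_chainCount n u).mono (sigmaOn_le hR) le_rfl

theorem measurable_sigmaOn_sum_chainCount_append {n k : ℕ} (hk : k ≠ 0) (u : List (Fin d)) :
    Measurable[sigmaOn R {x | u <+: x ∧ x ≠ u}]
      (fun ω => ∑ w : Fin k → Fin d, chainCount R F n (u ++ List.ofFn w) ω) :=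
  Finset.measurable_sum _ fun w _ => (measurable_sigmaOn_chainCount n _).mono
    (sigmaOn_mono (setOf_append_prefix_subset (by simpa using hk))) le_rfl

theorem chainCount_succ_sq (n : ℕ) (u : List (Fin d)) (ω : Ω) :
    chainCount R F (n + 1) u ω ^ 2 = ∑ k ∈ F, {ω | R u ω = k}.indicator 1 ω *
      (∑ w : Fin k → Fin d, chainCount R F n (u ++ List.ofFn w) ω) ^ 2 := by
  simp only [chainCount, Set.indicator_apply, Set.mem_ofPred_eq, Pi.one_apply, ite_mul, one_mul,
    zero_mul, Finset.sum_ite_eq]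
  split_ifs <;> simp

variable [MeasurableSpace Ω] {P : Measure Ω} {p : ℕ → ℝ≥0∞}

theorem lintegral_indicator_mul_eq (hR : IsIIDWithLaw P R p) (u : List (Fin d)) (k : ℕ)
    {g : Ω → ℝ≥0∞} (hg : Measurable[sigmaOn R {x | u <+: x ∧ x ≠ u}] g) :
    ∫⁻ ω, {ω | R u ω = k}.indicator 1 ω * g ω ∂P = p k * ∫⁻ ω, g ω ∂P := by
  have hk : MeasurableSet {ω | R u ω = k} := hR.measurable u (measurableSet_singleton k)
  rw [lintegral_mul_eq_mul_lintegral_of_disjoint hR.measurable hR.indep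
    (Set.disjoint_singleton_left.mpr fun h => h.2 rfl)
    (measurable_indicator_sigmaOn (Set.mem_singleton u) k) hg,
    lintegral_indicator_one hk, hR.law]

theorem lintegral_chainCount [IsProbabilityMeasure P] (hR : IsIIDWithLaw P R p) (hF : 0 ∉ F)
    (n : ℕ) (u : List (Fin d)) :
    ∫⁻ ω, chainCount R F n u ω ∂P = (∑ k ∈ F, (d : ℝ≥0∞) ^ k * p k) ^ n := by
  induction n generalizing u with
  | zero => simp [chainCount]
  | succ n ih =>
    have hmeas : ∀ k ∈ F, Measurable fun ω => {ω | R u ω = k}.indicator 1 ω *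
        ∑ w : Fin k → Fin d, chainCount R F n (u ++ List.ofFn w) ω := fun k _ =>
      (measurable_one.indicator (hR.measurable u (measurableSet_singleton k))).mul
        (Finset.measurable_sum _ fun w _ => measurable_chainCount hR.measurable n _)
    simp only [chainCount]
    rw [lintegral_finsetSum _ hmeas, pow_succ, mul_comm, Finset.sum_mul]
    refine Finset.sum_congr rfl fun k hk => ?_
    rw [lintegral_indicator_mul_eq hR u k
        (measurable_sigmaOn_sum_chainCount_append (ne_of_mem_of_not_mem hk hF) u),
      lintegral_finsetSum _ fun w _ => measurable_chainCount hR.measurable n _]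
    simp [ih, mul_comm, mul_assoc]

theorem lintegral_sq_sum_chainCount_le [IsProbabilityMeasure P] (hR : IsIIDWithLaw P R p)
    (hF : 0 ∉ F) {n k : ℕ} (u : List (Fin d)) {B : ℝ≥0∞}
    (hB : ∀ v, ∫⁻ ω, chainCount R F n v ω ^ 2 ∂P ≤ B) :
    ∫⁻ ω, (∑ w : Fin k → Fin d, chainCount R F n (u ++ List.ofFn w) ω) ^ 2 ∂P ≤
      (d : ℝ≥0∞) ^ k * B + ((d : ℝ≥0∞) ^ k) ^ 2 * ((∑ k ∈ F, (d : ℝ≥0∞) ^ k * p k) ^ n) ^ 2 := by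
  set M := (∑ k ∈ F, (d : ℝ≥0∞) ^ k * p k) ^ n
  have hmeas := measurable_chainCount (F := F) hR.measurable n
  have hpair : ∀ w w' : Fin k → Fin d,
      ∫⁻ ω, chainCount R F n (u ++ List.ofFn w) ω * chainCount R F n (u ++ List.ofFn w') ω ∂P ≤
        (if w = w' then B else 0) + M ^ 2 := by
    intro w w'
    by_cases hww : w = w'
    · subst hww
      simpa [← sq] using (hB _).trans le_self_add
    · rw [if_neg hww, zero_add, lintegral_mul_eq_mul_lintegral_of_disjoint hR.measurable hR.indep
        (disjoint_setOf_append_prefix (by simp) (List.ofFn_injective.ne hww))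
        (measurable_sigmaOn_chainCount n _) (measurable_sigmaOn_chainCount n _),
        lintegral_chainCount hR hF, lintegral_chainCount hR hF, sq]
  simp_rw [sq, Finset.sum_mul_sum]
  calc ∫⁻ ω, ∑ w : Fin k → Fin d, ∑ w' : Fin k → Fin d,
        chainCount R F n (u ++ List.ofFn w) ω * chainCount R F n (u ++ List.ofFn w') ω ∂P
      = ∑ w : Fin k → Fin d, ∫⁻ ω, ∑ w' : Fin k → Fin d,
        chainCount R F n (u ++ List.ofFn w) ω * chainCount R F n (u ++ List.ofFn w') ω ∂P :=
        lintegral_finsetSum _ fun w _ => Finset.measurable_sum _ fun w' _ => (hmeas _).mul (hmeas _)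
    _ ≤ ∑ w : Fin k → Fin d, ∑ w' : Fin k → Fin d, ((if w = w' then B else 0) + M * M) := by
        refine Finset.sum_le_sum fun w _ => ?_
        exact (lintegral_finsetSum _ fun w' _ => (hmeas _).mul (hmeas _)).trans_le
          (Finset.sum_le_sum fun w' _ => sq M ▸ hpair w w')
    _ = (d : ℝ≥0∞) ^ k * B + (d : ℝ≥0∞) ^ k * (d : ℝ≥0∞) ^ k * (M * M) := by
        simp [Finset.sum_add_distrib, mul_assoc]

theorem lintegral_chainCount_sq_le [IsProbabilityMeasure P] (hR : IsIIDWithLaw P R p)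
    (hF : 0 ∉ F) {C : ℝ≥0∞} (hC₁ : 1 ≤ C)
    (hC : (∑ k ∈ F, (d : ℝ≥0∞) ^ k * p k) * C + ∑ k ∈ F, ((d : ℝ≥0∞) ^ k) ^ 2 * p k ≤
      C * (∑ k ∈ F, (d : ℝ≥0∞) ^ k * p k) ^ 2) (n : ℕ) (u : List (Fin d)) :
    ∫⁻ ω, chainCount R F n u ω ^ 2 ∂P ≤ C * ((∑ k ∈ F, (d : ℝ≥0∞) ^ k * p k) ^ n) ^ 2 := by
  set m := ∑ k ∈ F, (d : ℝ≥0∞) ^ k * p k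
  induction n generalizing u with
  | zero => simpa [chainCount] using hC₁
  | succ n ih =>
    have hmeas : ∀ k ∈ F, Measurable fun ω => {ω | R u ω = k}.indicator 1 ω *
        (∑ w : Fin k → Fin d, chainCount R F n (u ++ List.ofFn w) ω) ^ 2 := fun k _ =>
      (measurable_one.indicator (hR.measurable u (measurableSet_singleton k))).mul
        ((Finset.measurable_sum _ fun w _ => measurable_chainCount hR.measurable n _).pow_const 2)
    simp_rw [chainCount_succ_sq]
    calc ∫⁻ ω, ∑ k ∈ F, {ω | R u ω = k}.indicator 1 ω *
          (∑ w : Fin k → Fin d, chainCount R F n (u ++ List.ofFn w) ω) ^ 2 ∂P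
        = ∑ k ∈ F, p k * ∫⁻ ω,
          (∑ w : Fin k → Fin d, chainCount R F n (u ++ List.ofFn w) ω) ^ 2 ∂P := by
          rw [lintegral_finsetSum _ hmeas]
          exact Finset.sum_congr rfl fun k hk => lintegral_indicator_mul_eq hR u k
            ((measurable_sigmaOn_sum_chainCount_append (ne_of_mem_of_not_mem hk hF) u).pow_const 2)
      _ ≤ ∑ k ∈ F, p k *
            ((d : ℝ≥0∞) ^ k * (C * (m ^ n) ^ 2) + ((d : ℝ≥0∞) ^ k) ^ 2 * (m ^ n) ^ 2) :=
          Finset.sum_le_sum fun k _ =>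
            mul_le_mul_right (lintegral_sq_sum_chainCount_le hR hF u ih) _
      _ = (m * C + ∑ k ∈ F, ((d : ℝ≥0∞) ^ k) ^ 2 * p k) * (m ^ n) ^ 2 := by
          rw [add_mul, Finset.sum_mul, Finset.sum_mul, Finset.sum_mul, ← Finset.sum_add_distrib]
          exact Finset.sum_congr rfl fun k _ => by ring
      _ ≤ C * m ^ 2 * (m ^ n) ^ 2 := mul_le_mul_left hC _
      _ = C * (m ^ (n + 1)) ^ 2 := by ring

end ChainCount

section Survival

variable {d : ℕ} {Ω : Type*} {R : List (Fin d) → Ω → ℕ} {F : Finset ℕ}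

theorem exists_mem_cluster_le_length_of_chainCount_ne_zero (hF : 0 ∉ F) {ω : Ω} {n : ℕ}
    {u : List (Fin d)} (hu : u ∈ cluster distPlus [] fun v => R v ω)
    (h : chainCount R F n u ω ≠ 0) :
    ∃ v ∈ cluster distPlus [] (fun v => R v ω), u.length + n ≤ v.length := by
  induction n generalizing u with
  | zero => exact ⟨u, hu, le_rfl⟩
  | succ n ih =>
    obtain ⟨k, hk, hk'⟩ := Finset.exists_ne_zero_of_sum_ne_zero h
    obtain ⟨hRu, hsum⟩ := mul_ne_zero_iff.mp hk'
    have hRu : R u ω = k := by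
      by_contra hne
      exact hRu (Set.indicator_of_notMem (s := {ω | R u ω = k}) hne _)
    obtain ⟨w, -, hw⟩ := Finset.exists_ne_zero_of_sum_ne_zero hsum
    obtain ⟨v, hv, hlen⟩ := ih (mem_cluster_of_dist_le hu
      (by rw [distPlus_append_right, List.length_ofFn, hRu])) hw
    refine ⟨v, hv, ?_⟩
    have hk0 : k ≠ 0 := ne_of_mem_of_not_mem hk hF
    simp only [List.length_append, List.length_ofFn] at hlen
    omega

theorem limsup_chainCount_ne_zero_subset_survival (hF : 0 ∉ F) :
    limsup (fun n => {ω | chainCount R F n [] ω ≠ 0}) atTop ⊆ survival distPlus [] R :=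
  fun ω hω => infinite_of_forall_exists_le_length fun N => by
    obtain ⟨n, hNn, hn⟩ := (mem_limsup_iff_frequently_mem.mp hω).forall_exists_of_atTop N
    obtain ⟨v, hv, hlen⟩ :=
      exists_mem_cluster_le_length_of_chainCount_ne_zero hF mem_cluster_self hn
    exact ⟨v, hv, hNn.trans (by simpa using hlen)⟩

end Survival

theorem conePercolation_plus_survives_of_expectation_gt_general
    (d : ℕ) (p : ℕ → ℝ≥0∞)
    (Ω : Type*) [MeasurableSpace Ω] (P : Measure Ω) [IsProbabilityMeasure P]
    (R : List (Fin d) → Ω → ℕ) (hRMeas : ∀ u, Measurable (R u))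
    (hRIndep : iIndepFun R P)
    (hRDist : ∀ u k, P {ω | R u ω = k} = p k)
    (hexp : 1 + p 0 < ∑' k : ℕ, (d : ℝ≥0∞) ^ k * p k) :
    0 < P (survival distPlus ([] : List (Fin d)) R) := by
  have hR : IsIIDWithLaw P R p := ⟨hRMeas, hRIndep, hRDist⟩
  have hp : ∀ k, p k ≠ ∞ := fun k => ne_top_of_le_ne_top ENNReal.one_ne_top
    (hRDist [] k ▸ prob_le_one)
  obtain ⟨F, hF, hm⟩ := exists_finset_one_lt_sum_of_one_add_lt_tsum
    (f := fun k => (d : ℝ≥0∞) ^ k * p k) (by simpa using hp 0) (by simpa using hexp)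
  have hm_top : ∑ k ∈ F, (d : ℝ≥0∞) ^ k * p k ≠ ∞ :=
    ENNReal.sum_ne_top.mpr fun k _ => ENNReal.mul_ne_top (by simp) (hp k)
  obtain ⟨C, hC_top, hC₁, hC⟩ := exists_one_le_and_mul_add_le_mul_sq hm hm_top
    (m₂ := ∑ k ∈ F, ((d : ℝ≥0∞) ^ k) ^ 2 * p k)
    (ENNReal.sum_ne_top.mpr fun k _ => ENNReal.mul_ne_top (by simp) (hp k))
  have hmeas := fun n => measurable_chainCount (F := F) hRMeas n []
  have hA : ∀ n, C⁻¹ ≤ P {ω | chainCount R F n [] ω ≠ 0} := fun n =>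
    inv_le_measure_ne_zero_of_lintegral_sq_le (hmeas n)
      (pow_ne_zero n (zero_lt_one.trans hm).ne') (ENNReal.pow_ne_top hm_top)
      (lintegral_chainCount hR hF n [])
      (lintegral_chainCount_sq_le hR hF hC₁ hC n [])
  calc 0 < C⁻¹ := ENNReal.inv_pos.mpr hC_top
    _ ≤ P (limsup (fun n => {ω | chainCount R F n [] ω ≠ 0}) atTop) :=
      le_measure_limsup_atTop (fun n => hmeas n (measurableSet_singleton 0).compl) hA
    _ ≤ P (survival distPlus [] R) := measure_mono (limsup_chainCount_ne_zero_subset_survival hF)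

/-- Cone percolation on `T_d^+` with radius of influence `R` of
distribution `p`.  If `E[d^R] = ∑_k d^k p_k > 1 + p_0` then `P_+[V] > 0`. -/
theorem conePercolation_plus_survives_of_expectation_gt
    (d : ℕ) (hd : 2 ≤ d) (p : ℕ → ℝ≥0∞) (hp0 : 0 < p 0) (hp1 : p 0 < 1)
    (Ω : Type*) [MeasurableSpace Ω] (P : Measure Ω) [IsProbabilityMeasure P]
    (R : List (Fin d) → Ω → ℕ) (hRMeas : ∀ u, Measurable (R u))
    (hRIndep : iIndepFun R P)
    (hRDist : ∀ u k, P {ω | R u ω = k} = p k)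
    (hexp : 1 + p 0 < ∑' k : ℕ, (d : ℝ≥0∞) ^ k * p k) :
    0 < P (survival distPlus ([] : List (Fin d)) R) :=
  conePercolation_plus_survives_of_expectation_gt_general d p Ω P R hRMeas hRIndep hRDist hexp
end
end

section
/- Fix integers n ≥ 1 and j ≥ 0. In the heterogeneous cone percolation process on T_d^+, the probability ρ_j^n = P[V^n_{u,v}] (for any fixed pair u ≤ v with dist(O,u) = jn and dist(O,v) = (j+1)n) satisfies ρ_j^n ≥ ∏_{k=0}^{n−1} [ 1 − ∏_{i=0}^{k} P[R_{jn+i} < k+1−i] ]. -/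
/-!
Along the path `u = u_0, …, u_n = u ++ w` the radii are independent, so `V^n_{u,v}` is an event
for the product of their laws on `ℕⁿ`. It is the intersection over `k < n` of the increasing
events "some `u_i` with `i ≤ k` covers `u_{k+1}`", whose complements are boxes of probability
`∏_{i ≤ k} P[R_{jn+i} < k+1-i]`. The Harris inequality for product measures on a chain
(Chebyshev's integral inequality in one coordinate, then Fubini and induction) bounds the
probability of the intersection from below by the product of the probabilities.
-/

open MeasureTheory ProbabilityTheory Filter Set
open scoped ENNReal

noncomputable section

/-- The event `V^n_{u,v}` that the process restarted from `u` alone reaches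
`v = u ++ w` in at most `n = w.length` steps:  writing `u_i = u ++ w.take i` for the
path from `u` to `v`, it is `⋂_{k=0}^{n-1} ⋃_{i=0}^{k} {R̄_{u_i} ≥ k + 1 - i}`. -/
def reachEvent {d : ℕ} {Ω : Type*} (R : List (Fin d) → Ω → ℕ) (u w : List (Fin d)) : Set Ω :=
  ⋂ k ∈ Finset.range w.length, ⋃ i ∈ Finset.range (k + 1),
    {ω | k + 1 - i ≤ R (u ++ w.take i) ω}

theorem mul_add_mul_le_mul_add_mul_of_canonicallyOrderedAdd {R : Type*} [CommSemiring R]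
    [PartialOrder R] [CanonicallyOrderedAdd R] {a b c e : R} (hab : a ≤ b) (hce : c ≤ e) :
    a * e + b * c ≤ a * c + b * e := by
  obtain ⟨b, rfl⟩ := exists_add_of_le hab
  obtain ⟨e, rfl⟩ := exists_add_of_le hce
  calc a * (c + e) + (a + b) * c = a * c + a * c + a * e + b * c := by ring
    _ ≤ a * c + a * c + a * e + b * c + b * e := le_self_add
    _ = a * c + (a + b) * (c + e) := by ring

section Harris

variable {α : Type*} [LinearOrder α] [MeasurableSpace α]

theorem lintegral_mul_lintegral_le_lintegral_mul_of_monotone (μ : Measure α)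
    [IsProbabilityMeasure μ] {f g : α → ℝ≥0∞} (hf : Monotone f) (hg : Monotone g)
    (hfm : Measurable f) (hgm : Measurable g) :
    (∫⁻ x, f x ∂μ) * ∫⁻ x, g x ∂μ ≤ ∫⁻ x, f x * g x ∂μ := by
  have hpair : ∀ x y, f x * g y + f y * g x ≤ f x * g x + f y * g y := by
    intro x y
    rcases le_total x y with h | h
    · exact mul_add_mul_le_mul_add_mul_of_canonicallyOrderedAdd (hf h) (hg h)
    · rw [add_comm (f x * g y), add_comm (f x * g x)]
      exact mul_add_mul_le_mul_add_mul_of_canonicallyOrderedAdd (hf h) (hg h)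
  have hcross : ∫⁻ x, ∫⁻ y, (f x * g y + f y * g x) ∂μ ∂μ
      = 2 * ((∫⁻ x, f x ∂μ) * ∫⁻ x, g x ∂μ) := by
    simp only [lintegral_add_left (hgm.const_mul _), lintegral_const_mul _ hgm,
      lintegral_mul_const _ hfm]
    rw [lintegral_add_left (hfm.mul_const _), lintegral_mul_const _ hfm,
      lintegral_const_mul _ hgm]
    ring
  have hdiag : ∫⁻ x, ∫⁻ y, (f x * g x + f y * g y) ∂μ ∂μ = 2 * ∫⁻ x, f x * g x ∂μ := by
    simp only [lintegral_add_left measurable_const, lintegral_const, measure_univ, mul_one]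
    rw [lintegral_add_right _ measurable_const, lintegral_const, measure_univ, mul_one]
    ring
  refine (ENNReal.mul_le_mul_iff_right two_ne_zero ENNReal.ofNat_ne_top).mp ?_
  rw [← hcross, ← hdiag]
  exact lintegral_mono fun x => lintegral_mono fun y => hpair x y

variable [Countable α] [MeasurableSingletonClass α]

theorem lintegral_mul_lintegral_le_lintegral_mul_pi_of_monotone {n : ℕ} (μ : Fin n → Measure α)
    [∀ i, IsProbabilityMeasure (μ i)] {f g : (Fin n → α) → ℝ≥0∞} (hf : Monotone f)
    (hg : Monotone g) :
    (∫⁻ x, f x ∂Measure.pi μ) * ∫⁻ x, g x ∂Measure.pi μ ≤ ∫⁻ x, f x * g x ∂Measure.pi μ := by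
  induction n with
  | zero =>
    have hconst (h : (Fin 0 → α) → ℝ≥0∞) : ∫⁻ x, h x ∂Measure.pi μ = h default := by
      rw [show h = fun _ => h default from funext fun x => congrArg h (Subsingleton.elim x _),
        lintegral_const, measure_univ, mul_one]
    simp only [hconst, le_rfl]
  | succ n ih =>
    -- Fubini in the first coordinate: Chebyshev's inequality applies to the sections `F`, `G`,
    -- the induction hypothesis to the remaining coordinates.
    have hins {x x' : α} {y y' : Fin n → α} (hx : x ≤ x') (hy : y ≤ y') :
        (Fin.insertNth 0 x y : Fin (n + 1) → α) ≤ Fin.insertNth 0 x' y' :=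
      Fin.insertNth_le_iff.2 ⟨by simpa using hx, fun i => by simpa using hy i⟩
    set μ' := fun i => μ (Fin.succAbove 0 i)
    have hsplit (h : (Fin (n + 1) → α) → ℝ≥0∞) : ∫⁻ x, h x ∂Measure.pi μ
        = ∫⁻ x, ∫⁻ y, h (Fin.insertNth 0 x y) ∂Measure.pi μ' ∂μ 0 := by
      rw [← (measurePreserving_piFinSuccAbove μ 0).symm.lintegral_comp_emb
        (MeasurableEquiv.measurableEmbedding _),
        lintegral_prod _ (measurable_of_countable _).aemeasurable]
      rfl
    set F := fun x => ∫⁻ y, f (Fin.insertNth 0 x y) ∂Measure.pi μ'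
    set G := fun x => ∫⁻ y, g (Fin.insertNth 0 x y) ∂Measure.pi μ'
    have hF : Monotone F := fun _ _ hx => lintegral_mono fun _ => hf (hins hx le_rfl)
    have hG : Monotone G := fun _ _ hx => lintegral_mono fun _ => hg (hins hx le_rfl)
    calc (∫⁻ x, f x ∂Measure.pi μ) * ∫⁻ x, g x ∂Measure.pi μ
        = (∫⁻ x, F x ∂μ 0) * ∫⁻ x, G x ∂μ 0 := by rw [hsplit f, hsplit g]
      _ ≤ ∫⁻ x, F x * G x ∂μ 0 :=
        lintegral_mul_lintegral_le_lintegral_mul_of_monotone _ hF hG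
          (measurable_of_countable _) (measurable_of_countable _)
      _ ≤ ∫⁻ x, ∫⁻ y, f (Fin.insertNth 0 x y) * g (Fin.insertNth 0 x y) ∂Measure.pi μ' ∂μ 0 :=
        lintegral_mono fun x => ih μ'
          (fun _ _ hy => hf (hins le_rfl hy)) (fun _ _ hy => hg (hins le_rfl hy))
      _ = ∫⁻ x, f x * g x ∂Measure.pi μ := (hsplit fun x => f x * g x).symm

theorem measure_mul_measure_le_measure_inter_pi {n : ℕ} (μ : Fin n → Measure α)
    [∀ i, IsProbabilityMeasure (μ i)] {A B : Set (Fin n → α)} (hA : IsUpperSet A)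
    (hB : IsUpperSet B) :
    Measure.pi μ A * Measure.pi μ B ≤ Measure.pi μ (A ∩ B) := by
  have hmono {S : Set (Fin n → α)} (hS : IsUpperSet S) :
      Monotone (S.indicator (1 : (Fin n → α) → ℝ≥0∞)) := by
    intro x y hxy
    by_cases hx : x ∈ S
    · simp [hx, hS hxy hx]
    · simp [hx]
  have hind (S : Set (Fin n → α)) : ∫⁻ x, S.indicator 1 x ∂Measure.pi μ = Measure.pi μ S :=
    lintegral_indicator_one MeasurableSet.of_discrete
  calc Measure.pi μ A * Measure.pi μ B
      = (∫⁻ x, A.indicator 1 x ∂Measure.pi μ) * ∫⁻ x, B.indicator 1 x ∂Measure.pi μ := by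
        rw [hind, hind]
    _ ≤ ∫⁻ x, A.indicator 1 x * B.indicator 1 x ∂Measure.pi μ :=
      lintegral_mul_lintegral_le_lintegral_mul_pi_of_monotone μ (hmono hA) (hmono hB)
    _ = Measure.pi μ (A ∩ B) := by rw [← hind, Set.inter_indicator_one]; rfl

theorem prod_measure_le_measure_biInter_pi {n : ℕ} (μ : Fin n → Measure α)
    [∀ i, IsProbabilityMeasure (μ i)] {ι : Type*} (s : Finset ι) {A : ι → Set (Fin n → α)}
    (hA : ∀ k ∈ s, IsUpperSet (A k)) :
    ∏ k ∈ s, Measure.pi μ (A k) ≤ Measure.pi μ (⋂ k ∈ s, A k) := by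
  classical
  induction s using Finset.induction_on with
  | empty => simp
  | insert a s ha ih =>
    rw [Finset.prod_insert ha, Finset.set_biInter_insert]
    calc Measure.pi μ (A a) * ∏ k ∈ s, Measure.pi μ (A k)
        ≤ Measure.pi μ (A a) * Measure.pi μ (⋂ k ∈ s, A k) := by
          gcongr
          exact ih fun k hk => hA k (Finset.mem_insert_of_mem hk)
      _ ≤ Measure.pi μ (A a ∩ ⋂ k ∈ s, A k) :=
        measure_mul_measure_le_measure_inter_pi μ (hA a (Finset.mem_insert_self a s))
          (isUpperSet_iInter₂ fun k hk => hA k (Finset.mem_insert_of_mem hk))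

end Harris

theorem pi_setOf_forall_le_mem {α : Type*} [MeasurableSpace α] (ν : ℕ → Measure α)
    [∀ i, IsProbabilityMeasure (ν i)] {n k : ℕ} (hk : k < n) (t : ℕ → Set α) :
    Measure.pi (fun i : Fin n => ν i) {y | ∀ i : Fin n, (i : ℕ) ≤ k → y i ∈ t i}
      = ∏ i ∈ Finset.range (k + 1), ν i (t i) := by
  have hbox : {y : Fin n → α | ∀ i : Fin n, (i : ℕ) ≤ k → y i ∈ t i}
      = Set.univ.pi fun i : Fin n => if (i : ℕ) ≤ k then t i else Set.univ := by
    ext y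
    simp only [Set.mem_ofPred_eq, Set.mem_pi, Set.mem_univ, true_implies]
    refine forall_congr' fun i => ?_
    split_ifs with hi <;> simp [hi]
  rw [hbox, Measure.pi_pi]
  simp only [apply_ite, measure_univ]
  rw [Fin.prod_univ_eq_prod_range (fun i => if i ≤ k then ν i (t i) else 1), ← Finset.prod_filter]
  congr 1
  ext i
  simp only [Finset.mem_filter, Finset.mem_range]
  omega

def pathBlocked (n k : ℕ) : Set (Fin n → ℕ) :=
  {y | ∀ i : Fin n, (i : ℕ) ≤ k → y i < k + 1 - i}

theorem isLowerSet_pathBlocked (n k : ℕ) : IsLowerSet (pathBlocked n k) :=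
  fun _ _ hxy hx i hi => (hxy i).trans_lt (hx i hi)

section PathRadii

variable {d : ℕ} {Ω : Type*} (R : List (Fin d) → Ω → ℕ) (u w : List (Fin d))

def pathRadii : Ω → Fin w.length → ℕ := fun ω i => R (u ++ w.take i) ω

theorem reachEvent_eq_preimage_pathRadii :
    reachEvent R u w
      = pathRadii R u w ⁻¹' ⋂ k ∈ Finset.range w.length, (pathBlocked w.length k)ᶜ := by
  ext ω
  simp only [reachEvent, pathBlocked, pathRadii, Set.mem_iInter, Set.mem_iUnion,
    Set.mem_preimage, Set.mem_compl_iff, Set.mem_ofPred_eq, Finset.mem_range, not_forall,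
    not_lt, exists_prop]
  refine forall₂_congr fun k hk => ⟨?_, ?_⟩
  · rintro ⟨i, hik, hi⟩
    exact ⟨⟨i, by omega⟩, by simpa using Nat.lt_succ_iff.1 hik, hi⟩
  · rintro ⟨i, hik, hi⟩
    exact ⟨i, Nat.lt_succ_iff.2 hik, hi⟩

variable [MeasurableSpace Ω] {R}

theorem measurable_pathRadii (hRMeas : ∀ v, Measurable (R v)) : Measurable (pathRadii R u w) :=
  measurable_pi_lambda _ fun _ => hRMeas _

theorem map_pathRadii {P : Measure Ω} {ν : ℕ → Measure ℕ} (hRMeas : ∀ v, Measurable (R v))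
    (hRIndep : iIndepFun R P) (hRDist : ∀ v, P.map (R v) = ν v.length) :
    P.map (pathRadii R u w) = Measure.pi fun i : Fin w.length => ν (u.length + i) := by
  have hinj : Function.Injective fun i : Fin w.length => u ++ w.take i := by
    intro i i' h
    have := congrArg List.length h
    simp only [List.length_append, List.length_take] at this
    omega
  unfold pathRadii
  rw [(hRIndep.precomp hinj).map_fun_eq_pi_map fun _ => (hRMeas _).aemeasurable]
  congr 1
  ext1 i
  rw [hRDist, List.length_append, List.length_take, min_eq_left i.isLt.le]

end PathRadii

theorem heterogeneousConePercolation_reach_prob_lower_bound_general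
    (d : ℕ) (ν : ℕ → Measure ℕ) [∀ z, IsProbabilityMeasure (ν z)]
    (Ω : Type*) [MeasurableSpace Ω] (P : Measure Ω) [IsProbabilityMeasure P]
    (R : List (Fin d) → Ω → ℕ) (hRMeas : ∀ u, Measurable (R u))
    (hRIndep : iIndepFun R P)
    (hRDist : ∀ u, Measure.map (R u) P = ν u.length)
    (n j : ℕ) (u w : List (Fin d)) (hu : u.length = j * n)
    (hw : w.length = n) :
    ∏ k ∈ Finset.range n,
        (1 - ∏ i ∈ Finset.range (k + 1), ν (j * n + i) {x | x < k + 1 - i})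
      ≤ P (reachEvent R u w) := by
  subst hw
  rw [reachEvent_eq_preimage_pathRadii, ← Measure.map_apply (measurable_pathRadii u w hRMeas)
    MeasurableSet.of_discrete, map_pathRadii u w hRMeas hRIndep hRDist, ← hu]
  calc ∏ k ∈ Finset.range w.length,
        (1 - ∏ i ∈ Finset.range (k + 1), ν (u.length + i) {x | x < k + 1 - i})
      = ∏ k ∈ Finset.range w.length,
          Measure.pi (fun i : Fin w.length => ν (u.length + i)) (pathBlocked w.length k)ᶜ := by
        refine Finset.prod_congr rfl fun k hk => ?_
        rw [prob_compl_eq_one_sub MeasurableSet.of_discrete]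
        exact congrArg _ (pi_setOf_forall_le_mem _ (Finset.mem_range.1 hk) _).symm
    _ ≤ _ := prod_measure_le_measure_biInter_pi _ _ fun k _ => (isLowerSet_pathBlocked _ k).compl

/-- Heterogeneous cone percolation on `T_d^+`: the radius of a vertex
at distance `z` from the root has law `ν z`.  Fix `n ≥ 1` and `j ≥ 0`.  For any
pair `u ≤ v` with `dist(O, u) = j n` and `dist(O, v) = (j+1) n` (that is, `v = u ++ w`
with `w.length = n`), the probability `ρ_j^n = P[V^n_{u,v}]` satisfies
`ρ_j^n ≥ ∏_{k=0}^{n-1} [1 - ∏_{i=0}^{k} P[R_{jn+i} < k+1-i]]`. -/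
theorem heterogeneousConePercolation_reach_prob_lower_bound
    (d : ℕ) (hd : 2 ≤ d) (ν : ℕ → Measure ℕ) [∀ z, IsProbabilityMeasure (ν z)]
    (hν : ∀ z, ν z {0} < 1)
    (Ω : Type*) [MeasurableSpace Ω] (P : Measure Ω) [IsProbabilityMeasure P]
    (R : List (Fin d) → Ω → ℕ) (hRMeas : ∀ u, Measurable (R u))
    (hRIndep : iIndepFun R P)
    (hRDist : ∀ u, Measure.map (R u) P = ν u.length)
    (n j : ℕ) (hn : 1 ≤ n) (u w : List (Fin d)) (hu : u.length = j * n)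
    (hw : w.length = n) :
    ∏ k ∈ Finset.range n,
        (1 - ∏ i ∈ Finset.range (k + 1), ν (j * n + i) {x | x < k + 1 - i})
      ≤ P (reachEvent R u w) :=
  heterogeneousConePercolation_reach_prob_lower_bound_general d ν Ω P R hRMeas hRIndep hRDist n j u
    w hu hw
end
end

section
/- Consider the cone percolation process on T_d with binomial radius of influence, R ~ Binomial(n, p), i.e. P[R = k] = C(n,k) p^k (1 − p)^{n−k} for k = 0,1,...,n, where 0 < p < 1 and n ≥ 1. If (pd + 1 − p)^n − (1 − p)^n > 1, then P[V] > 0. -/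
open MeasureTheory ProbabilityTheory Filter Set
open scoped ENNReal

noncomputable section

/-!
Only the branch of `T_d` through the neighbour `some (0, [])` of the origin is used; its vertices
are the words over `Fin d`. Give a word `v` with radius `k ≥ 1` the `d ^ k` children `v ++ s` with
`s.length = k`: they lie at distance `k` from `v`, so they are reached as soon as `v` is. This is a
Galton–Watson tree inside the cluster (`genSize r m v` is the size of its `m`-th generation below
`v`), with offspring number `offspring d R` of mean
`E[d ^ R] - P[R = 0] = (pd + 1 - p)^n - (1 - p)^n > 1`; expanding `(1 - ε) ^ M` to second order gives `ρ < 1` with `E[ρ ^ offspring d R] ≤ ρ`.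
The subtrees of distinct children are built from disjoint sets of radii, independent of each other
and of `R_v`, so induction on `m` gives `E[ρ ^ genSize R m v] ≤ ρ` for every `v`; hence the tree
dies out with probability at most `ρ`. On the independent event `R_O ≥ 1` the origin reaches
`some (0, [])`, and survival of the tree makes the cluster infinite.
-/

namespace ConePercolation

section Probability

variable {Ω : Type*}

theorem measurable_apply_of_nat {M : MeasurableSpace Ω} {β : Type*} [MeasurableSpace β]
    {f : Ω → ℕ} {G : ℕ → Ω → β} (hf : Measurable[M] f) (hG : ∀ k, Measurable[M] (G k)) :
    Measurable[M] fun ω => G (f ω) ω :=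
  (measurable_from_prod_countable_left (f := fun q : Ω × ℕ => G q.2 q.1) hG).comp
    (measurable_id.prodMk hf)

theorem lintegral_apply_eq_tsum_of_indep {M mΩ : MeasurableSpace Ω} {μ : Measure Ω}
    (hM : M ≤ mΩ) {f : Ω → ℕ} (hf : Measurable f)
    (hind : Indep (MeasurableSpace.comap f inferInstance) M μ)
    {G : ℕ → Ω → ℝ≥0∞} (hG : ∀ k, Measurable[M] (G k)) :
    ∫⁻ ω, G (f ω) ω ∂μ = ∑' k, μ {ω | f ω = k} * ∫⁻ ω, G k ω ∂μ := by
  have hfk : ∀ k, Measurable[MeasurableSpace.comap f inferInstance]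
      ({ω | f ω = k}.indicator (1 : Ω → ℝ≥0∞)) :=
    fun k => (measurable_one.indicator (measurableSet_singleton k)).comp (comap_measurable f)
  have hsplit : ∀ ω, G (f ω) ω = ∑' k, {ω | f ω = k}.indicator 1 ω * G k ω := fun ω => by
    rw [tsum_eq_single (f ω) fun k hk => by simp [Ne.symm hk]]
    simp
  have hk : ∀ k, MeasurableSet {ω | f ω = k} := fun k => hf (measurableSet_singleton k)
  have hG' : ∀ k, Measurable (G k) := fun k => (hG k).mono hM le_rfl
  rw [lintegral_congr hsplit, lintegral_tsum fun k =>
    ((measurable_one.indicator (hk k)).fun_mul (hG' k)).aemeasurable]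
  congr 1 with k
  rw [lintegral_mul_eq_lintegral_mul_lintegral_of_independent_measurableSpace
    (MeasurableSpace.comap_le_iff_le_map.mpr hf) hM hind (hfk k) (hG k),
    lintegral_indicator_one (hk k)]

theorem lintegral_prod_of_iIndep {mΩ : MeasurableSpace Ω} {μ : Measure Ω}
    [IsProbabilityMeasure μ] {ι κ : Type*} {m : ι → MeasurableSpace Ω}
    (hle : ∀ i, m i ≤ mΩ) (hind : iIndep m μ) {S : κ → Set ι} {F : Finset κ}
    (hS : (F : Set κ).PairwiseDisjoint S) {f : κ → Ω → ℝ≥0∞}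
    (hf : ∀ j ∈ F, Measurable[⨆ i ∈ S j, m i] (f j)) :
    ∫⁻ ω, ∏ j ∈ F, f j ω ∂μ = ∏ j ∈ F, ∫⁻ ω, f j ω ∂μ := by
  classical
  induction F using Finset.induction_on with
  | empty => simp
  | insert a F ha ih =>
    have hSF : (F : Set κ).PairwiseDisjoint S := hS.subset (by simp)
    have hdisj : Disjoint (S a) (⋃ j ∈ F, S j) := by
      refine Set.disjoint_iUnion₂_right.mpr fun j hj => hS (by simp) (by simp [hj]) ?_
      rintro rfl
      exact ha hj
    have hprod : Measurable[⨆ i ∈ ⋃ j ∈ F, S j, m i] fun ω => ∏ j ∈ F, f j ω :=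
      Finset.measurable_prod F fun j hj => (hf j (by simp [hj])).mono
        (iSup₂_le fun i hi => le_iSup₂ (f := fun i (_ : i ∈ ⋃ j ∈ F, S j) => m i) i
          (Set.mem_biUnion hj hi)) le_rfl
    simp_rw [Finset.prod_insert ha]
    rw [lintegral_mul_eq_lintegral_mul_lintegral_of_independent_measurableSpace
      (iSup₂_le fun i _ => hle i) (iSup₂_le fun i _ => hle i)
      (indep_iSup_of_disjoint hle hind hdisj) (hf a (by simp)) hprod,
      ih hSF fun j hj => hf j (by simp [hj])]

theorem measurable_iSup_comap {ι β : Type*} [MeasurableSpace β] {X : ι → Ω → β} {S : Set ι}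
    {i : ι} (hi : i ∈ S) :
    Measurable[⨆ j ∈ S, MeasurableSpace.comap (X j) inferInstance] (X i) :=
  (comap_measurable (X i)).mono
    (le_iSup₂ (f := fun j (_ : j ∈ S) => MeasurableSpace.comap (X j) inferInstance) i hi) le_rfl

theorem measure_inter_eq_mul_of_iIndepFun {ι β : Type*} [MeasurableSpace Ω] {μ : Measure Ω}
    [MeasurableSpace β] {f : ι → Ω → β} (hf : ∀ i, Measurable (f i)) (h : iIndepFun f μ)
    (i : ι) {s : Set β} (hs : MeasurableSet s) {A : Set Ω}
    (hA : MeasurableSet[⨆ j ∈ ({i}ᶜ : Set ι), MeasurableSpace.comap (f j) inferInstance] A) :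
    μ (f i ⁻¹' s ∩ A) = μ (f i ⁻¹' s) * μ A :=
  (Indep_iff _ _ μ).mp (indep_iSup_of_disjoint (fun j => (hf j).comap_le)
    ((iIndepFun_iff_iIndep _ f μ).mp h) (S := {i}) disjoint_compl_right) _ _
    (measurable_iSup_comap (X := f) (S := {i}) rfl hs) hA

end Probability

theorem one_sub_pow_le {ε : ℝ} (h0 : 0 ≤ ε) (h1 : ε ≤ 1) (M : ℕ) :
    (1 - ε) ^ M ≤ 1 - M * ε + M ^ 2 * ε ^ 2 := by
  induction M with
  | zero => simp
  | succ M ih =>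
    rw [pow_succ]
    push_cast
    nlinarith [mul_le_mul_of_nonneg_right ih (sub_nonneg.mpr h1), sq_nonneg (M * ε),
      mul_nonneg (mul_nonneg h0 h0) (Nat.cast_nonneg M)]

theorem exists_sum_mul_pow_le {ι : Type*} (s : Finset ι) {b : ι → ℝ} (M : ι → ℕ)
    (hb : ∀ i ∈ s, 0 ≤ b i) (hsum : ∑ i ∈ s, b i = 1) (hmean : 1 < ∑ i ∈ s, b i * M i) :
    ∃ x : ℝ, 0 ≤ x ∧ x < 1 ∧ ∑ i ∈ s, b i * x ^ M i ≤ x := by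
  set m := ∑ i ∈ s, b i * M i
  set κ := ∑ i ∈ s, b i * M i ^ 2
  have hκ : 0 ≤ κ := Finset.sum_nonneg fun i hi => mul_nonneg (hb i hi) (sq_nonneg _)
  set ε := min (1 / 2) ((m - 1) / (κ + 1))
  have hε0 : 0 < ε := lt_min (by norm_num) (div_pos (by linarith) (by linarith))
  have hε1 : ε ≤ 1 / 2 := min_le_left _ _
  have hεκ : ε * (κ + 1) ≤ m - 1 := (le_div_iff₀ (by linarith)).mp (min_le_right _ _)
  refine ⟨1 - ε, by linarith, by linarith, ?_⟩
  calc ∑ i ∈ s, b i * (1 - ε) ^ M i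
      ≤ ∑ i ∈ s, b i * (1 - M i * ε + M i ^ 2 * ε ^ 2) :=
        Finset.sum_le_sum fun i hi =>
          mul_le_mul_of_nonneg_left (one_sub_pow_le hε0.le (by linarith) _) (hb i hi)
    _ = ∑ i ∈ s, b i - ε * m + ε ^ 2 * κ := by
        rw [Finset.mul_sum, Finset.mul_sum, ← Finset.sum_sub_distrib, ← Finset.sum_add_distrib]
        exact Finset.sum_congr rfl fun i _ => by ring
    _ ≤ 1 - ε := by rw [hsum]; nlinarith

def offspring (d k : ℕ) : ℕ := if k = 0 then 0 else d ^ k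

theorem exists_binomial_fixedPoint (d n : ℕ) {p : ℝ} (hp0 : 0 ≤ p) (hp1 : p ≤ 1)
    (hcrit : 1 < (p * (d : ℝ) + 1 - p) ^ n - (1 - p) ^ n) :
    ∃ ρ : ℝ≥0∞, ρ < 1 ∧ ∑' k, ENNReal.ofReal ((n.choose k : ℝ) * p ^ k * (1 - p) ^ (n - k))
      * ρ ^ offspring d k ≤ ρ := by
  set b : ℕ → ℝ := fun k => (n.choose k : ℝ) * p ^ k * (1 - p) ^ (n - k)
  have hb : ∀ k, 0 ≤ b k := fun k => by
    have : 0 ≤ 1 - p := by linarith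
    positivity
  have hsum : ∑ k ∈ Finset.range (n + 1), b k = 1 := by
    have h := add_pow p (1 - p) n
    rw [add_sub_cancel, one_pow] at h
    rw [h]
    exact Finset.sum_congr rfl fun k _ => by ring
  have hpow : ∑ k ∈ Finset.range (n + 1), b k * (d : ℝ) ^ k = (p * d + 1 - p) ^ n := by
    rw [add_sub_assoc, add_pow]
    exact Finset.sum_congr rfl fun k _ => by ring
  have hmean : ∑ k ∈ Finset.range (n + 1), b k * (offspring d k : ℝ)
      = (p * d + 1 - p) ^ n - (1 - p) ^ n := by
    rw [← hpow, Finset.sum_range_succ', Finset.sum_range_succ' (fun k => b k * (d : ℝ) ^ k)]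
    simp [offspring, b]
  obtain ⟨x, hx0, hx1, hx⟩ :=
    exists_sum_mul_pow_le (Finset.range (n + 1)) (offspring d) (fun k _ => hb k) hsum
      (hmean ▸ hcrit)
  refine ⟨ENNReal.ofReal x, ENNReal.ofReal_lt_one.mpr hx1, ?_⟩
  rw [tsum_eq_sum (s := Finset.range (n + 1)) fun k hk => by
    simp [Nat.choose_eq_zero_of_lt (by simpa using hk)]]
  calc ∑ k ∈ Finset.range (n + 1), ENNReal.ofReal (b k) * ENNReal.ofReal x ^ offspring d k
      = ENNReal.ofReal (∑ k ∈ Finset.range (n + 1), b k * x ^ offspring d k) := by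
        rw [ENNReal.ofReal_sum_of_nonneg fun k _ => mul_nonneg (hb k) (pow_nonneg hx0 _)]
        exact Finset.sum_congr rfl fun k _ => by
          rw [ENNReal.ofReal_mul (hb k), ENNReal.ofReal_pow hx0]
    _ ≤ ENNReal.ofReal x := ENNReal.ofReal_le_ofReal hx

variable {d : ℕ}

def childSum (g : List (Fin d) → ℕ) (v : List (Fin d)) (k : ℕ) : ℕ :=
  if k = 0 then 0 else ∑ s : Fin k → Fin d, g (v ++ List.ofFn s)

def genSize (r : List (Fin d) → ℕ) : ℕ → List (Fin d) → ℕ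
  | 0, _ => 1
  | m + 1, v => childSum (genSize r m) v (r v)

theorem genSize_succ_eq_zero {r : List (Fin d) → ℕ} {m : ℕ} {v : List (Fin d)}
    (h : genSize r m v = 0) : genSize r (m + 1) v = 0 := by
  induction m generalizing v with
  | zero => simp [genSize] at h
  | succ m ih =>
    rw [genSize, childSum] at h ⊢
    split_ifs at h ⊢
    · rfl
    · simp only [Finset.sum_eq_zero_iff, Finset.mem_univ, true_implies] at h ⊢
      exact fun s => ih (h s)

theorem pairwiseDisjoint_prefix_ofFn (v : List (Fin d)) (k : ℕ) :
    (Set.univ : Set (Fin k → Fin d)).PairwiseDisjoint fun s => {w | v ++ List.ofFn s <+: w} := by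
  intro s _ t _ hst
  refine Set.disjoint_left.mpr fun w hs ht => hst ?_
  have hlen : (v ++ List.ofFn s).length = (v ++ List.ofFn t).length := by simp
  rcases List.prefix_or_prefix_of_prefix hs ht with h | h
  · exact List.ofFn_injective (List.append_cancel_left (h.eq_of_length hlen))
  · exact List.ofFn_injective (List.append_cancel_left (h.eq_of_length hlen.symm)).symm

section Measurability

variable {Ω : Type*} {M : MeasurableSpace Ω} {X : List (Fin d) → Ω → ℕ}

theorem measurable_genSize (m : ℕ) {v : List (Fin d)}
    (hX : ∀ w, v <+: w → Measurable[M] (X w)) :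
    Measurable[M] fun ω => genSize (X · ω) m v := by
  induction m generalizing v with
  | zero => exact measurable_const
  | succ m ih =>
    refine measurable_apply_of_nat (G := fun k ω => childSum (genSize (X · ω) m) v k)
      (hX v List.prefix_rfl) fun k => ?_
    unfold childSum
    split_ifs
    · exact measurable_const
    · exact Finset.measurable_sum _ fun s _ =>
        ih fun w hw => hX w ((List.prefix_append v _).trans hw)

theorem measurable_childSum_genSize (m k : ℕ) {v : List (Fin d)}
    (hX : ∀ w, v <+: w → w ≠ v → Measurable[M] (X w)) :
    Measurable[M] fun ω => childSum (genSize (X · ω) m) v k := by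
  unfold childSum
  split_ifs with hk
  · exact measurable_const
  refine Finset.measurable_sum _ fun s _ => measurable_genSize m fun w hw =>
    hX w ((List.prefix_append v _).trans hw) ?_
  rintro rfl
  exact hk (by simpa using hw.length_le)

theorem measurableSet_genSize_ne_zero (v : List (Fin d))
    (hX : ∀ w, v <+: w → Measurable[M] (X w)) :
    MeasurableSet[M] {ω | ∀ m, genSize (X · ω) m v ≠ 0} := by
  simp_rw [Set.ofPred_forall]
  exact .iInter fun m => measurable_genSize m hX (measurableSet_singleton 0).compl

end Measurability

section Extinction

variable {Ω : Type*} [MeasurableSpace Ω] {μ : Measure Ω} [IsProbabilityMeasure μ]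
  {X : List (Fin d) → Ω → ℕ}

theorem pow_childSum (ρ : ℝ≥0∞) (g : List (Fin d) → ℕ) (v : List (Fin d)) (k : ℕ) :
    ρ ^ childSum g v k = if k = 0 then 1 else ∏ s : Fin k → Fin d, ρ ^ g (v ++ List.ofFn s) := by
  unfold childSum
  split_ifs <;> simp [Finset.prod_pow_eq_pow_sum]

theorem lintegral_pow_childSum_le (hXm : ∀ w, Measurable (X w)) (hX : iIndepFun X μ)
    {ρ : ℝ≥0∞} {m : ℕ} (hm : ∀ w, ∫⁻ ω, ρ ^ genSize (X · ω) m w ∂μ ≤ ρ)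
    (v : List (Fin d)) (k : ℕ) :
    ∫⁻ ω, ρ ^ childSum (genSize (X · ω) m) v k ∂μ ≤ ρ ^ offspring d k := by
  simp_rw [pow_childSum]
  rcases eq_or_ne k 0 with rfl | hk
  · simp [offspring]
  simp only [hk, if_false, offspring]
  rw [lintegral_prod_of_iIndep (fun w => (hXm w).comap_le) ((iIndepFun_iff_iIndep _ X μ).mp hX)
    (F := Finset.univ) (S := fun s => {w | v ++ List.ofFn s <+: w})
    (f := fun s ω => ρ ^ genSize (X · ω) m (v ++ List.ofFn s))
    (by rw [Finset.coe_univ]; exact pairwiseDisjoint_prefix_ofFn v k)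
    fun s _ => measurable_from_top.comp (measurable_genSize m fun w hw => measurable_iSup_comap hw)]
  calc ∏ s : Fin k → Fin d, ∫⁻ ω, ρ ^ genSize (X · ω) m (v ++ List.ofFn s) ∂μ
      ≤ ∏ _s : Fin k → Fin d, ρ := Finset.prod_le_prod' fun s _ => hm _
    _ = ρ ^ d ^ k := by simp

theorem lintegral_pow_genSize_le (hXm : ∀ w, Measurable (X w)) (hX : iIndepFun X μ)
    {ρ : ℝ≥0∞} (hρ : ∀ w, ∑' k, μ {ω | X w ω = k} * ρ ^ offspring d k ≤ ρ) (m : ℕ)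
    (v : List (Fin d)) : ∫⁻ ω, ρ ^ genSize (X · ω) m v ∂μ ≤ ρ := by
  induction m generalizing v with
  | zero => simp [genSize]
  | succ m ih =>
    have hle : ∀ u, MeasurableSpace.comap (X u) inferInstance ≤ ‹MeasurableSpace Ω› :=
      fun u => (hXm u).comap_le
    have hindep := indep_iSup_of_disjoint hle ((iIndepFun_iff_iIndep _ X μ).mp hX)
      (S := {v}) (T := {u | v <+: u ∧ u ≠ v}) (by simp)
    calc ∫⁻ ω, ρ ^ genSize (X · ω) (m + 1) v ∂μ
        = ∑' k, μ {ω | X v ω = k} * ∫⁻ ω, ρ ^ childSum (genSize (X · ω) m) v k ∂μ :=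
          lintegral_apply_eq_tsum_of_indep (iSup₂_le fun u _ => hle u) (hXm v)
            (indep_of_indep_of_le_left hindep
              (measurable_iSup_comap (X := X) (S := {v}) rfl).comap_le)
            fun k => measurable_from_top.comp
              (measurable_childSum_genSize m k fun w hw hne => measurable_iSup_comap ⟨hw, hne⟩)
      _ ≤ ∑' k, μ {ω | X v ω = k} * ρ ^ offspring d k :=
          ENNReal.tsum_le_tsum fun k => by
            gcongr
            exact lintegral_pow_childSum_le hXm hX ih v k
      _ ≤ ρ := hρ v

theorem one_sub_le_measure_genSize_ne_zero (hXm : ∀ w, Measurable (X w)) (hX : iIndepFun X μ)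
    {ρ : ℝ≥0∞} (hρ : ∀ w, ∑' k, μ {ω | X w ω = k} * ρ ^ offspring d k ≤ ρ)
    (v : List (Fin d)) : 1 - ρ ≤ μ {ω | ∀ m, genSize (X · ω) m v ≠ 0} := by
  set A : ℕ → Set Ω := fun m => {ω | genSize (X · ω) m v = 0}
  have hA : ∀ m, MeasurableSet (A m) := fun m =>
    measurable_genSize m (fun w _ => hXm w) (measurableSet_singleton 0)
  have hAρ : ∀ m, μ (A m) ≤ ρ := fun m => calc
    μ (A m) = ∫⁻ ω, (A m).indicator 1 ω ∂μ := (lintegral_indicator_one (hA m)).symm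
    _ ≤ ∫⁻ ω, ρ ^ genSize (X · ω) m v ∂μ := lintegral_mono fun ω => by
      by_cases h : ω ∈ A m
      · simp [h, show genSize (X · ω) m v = 0 from h]
      · simp [h]
    _ ≤ ρ := lintegral_pow_genSize_le hXm hX hρ m v
  have hmono : Monotone A := monotone_nat_of_le_succ fun m _ => genSize_succ_eq_zero
  have hcompl : {ω | ∀ m, genSize (X · ω) m v ≠ 0} = (⋃ m, A m)ᶜ := by
    ext ω
    simp [A]
  rw [hcompl, prob_compl_eq_one_sub (MeasurableSet.iUnion hA), hmono.measure_iUnion]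
  exact tsub_le_tsub_left (iSup_le hAρ) 1

end Extinction

theorem lcpLen_self_append {α : Type*} [DecidableEq α] (w s : List α) :
    lcpLen w (w ++ s) = w.length := by
  induction w with
  | nil => cases s <;> rfl
  | cons a w ih => simp [lcpLen, ih]

theorem distFull_some_append (a : Fin (d + 1)) (w s : List (Fin d)) :
    distFull (some (a, w)) (some (a, w ++ s)) = s.length := by
  simp [distFull, lcpLen_self_append]

theorem mem_reachSet_succ {V : Type*} {dist : V → V → ℕ} {o : V} {r : V → ℕ} {j : ℕ} {u w : V}
    (hu : u ∈ reachSet dist o r j) (h : dist u w ≤ r u) : w ∈ reachSet dist o r (j + 1) :=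
  Set.mem_biUnion hu h

theorem exists_mem_reachSet_of_genSize_ne_zero (r : TdVertex d → ℕ) (a : Fin (d + 1))
    {m j : ℕ} {v : List (Fin d)} (hv : some (a, v) ∈ reachSet distFull none r j)
    (h : genSize (fun w => r (some (a, w))) m v ≠ 0) :
    ∃ s : List (Fin d), m ≤ s.length ∧ some (a, v ++ s) ∈ reachSet distFull none r (j + m) := by
  induction m generalizing v j with
  | zero => exact ⟨[], le_rfl, by simpa using hv⟩
  | succ m ih =>
    rw [genSize, childSum] at h
    split_ifs at h with hr
    · exact absurd rfl h
    obtain ⟨t, -, ht⟩ := Finset.exists_ne_zero_of_sum_ne_zero h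
    have hchild : some (a, v ++ List.ofFn t) ∈ reachSet distFull none r (j + 1) :=
      mem_reachSet_succ hv (by rw [distFull_some_append, List.length_ofFn])
    obtain ⟨s, hs, hmem⟩ := ih hchild ht
    refine ⟨List.ofFn t ++ s, by simp; omega, ?_⟩
    rwa [List.append_assoc, show j + 1 + m = j + (m + 1) by omega] at hmem

theorem cluster_infinite_of_genSize_ne_zero (r : TdVertex d → ℕ) (h0 : r none ≠ 0)
    (a : Fin (d + 1)) (h : ∀ m, genSize (fun w => r (some (a, w))) m [] ≠ 0) :
    (cluster distFull none r).Infinite := by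
  have hroot : some (a, []) ∈ reachSet distFull none r (0 + 1) :=
    mem_reachSet_succ rfl (by simp [distFull]; omega)
  refine Set.Infinite.of_image (distFull none) (Set.infinite_of_not_bddAbove ?_)
  rintro ⟨B, hB⟩
  obtain ⟨s, hs, hmem⟩ := exists_mem_reachSet_of_genSize_ne_zero r a hroot (h B)
  have := hB ⟨_, Set.mem_iUnion.mpr ⟨_, hmem⟩, rfl⟩
  simp [distFull] at this
  omega

end ConePercolation

open ConePercolation

theorem conePercolation_binomial_survives_general
    (d n : ℕ) (hn : 1 ≤ n) (p : ℝ) (hp0 : 0 < p) (hp1 : p < 1)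
    (Ω : Type*) [MeasurableSpace Ω] (P : Measure Ω) [IsProbabilityMeasure P]
    (R : TdVertex d → Ω → ℕ) (hRMeas : ∀ u, Measurable (R u))
    (hRIndep : iIndepFun R P)
    (hRDist : ∀ u k, P {ω | R u ω = k}
      = ENNReal.ofReal ((n.choose k : ℝ) * p ^ k * (1 - p) ^ (n - k)))
    (hcrit : 1 < (p * (d : ℝ) + 1 - p) ^ n - (1 - p) ^ n) :
    0 < P (survival distFull (none : TdVertex d) R) := by
  set X : List (Fin d) → Ω → ℕ := fun w => R (some (0, w))
  set C := {ω | ∀ m, genSize (X · ω) m [] ≠ 0}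
  obtain ⟨ρ, hρ1, hρ⟩ := exists_binomial_fixedPoint d n hp0.le hp1.le hcrit
  have hC : 1 - ρ ≤ P C :=
    one_sub_le_measure_genSize_ne_zero (fun w => hRMeas _)
      (hRIndep.precomp fun a b h => by simpa using h) (fun w => by simpa only [X, hRDist]) []
  have hroot : 0 < P {ω | R none ω ≠ 0} := by
    change 0 < P {ω | R none ω = 0}ᶜ
    rw [prob_compl_eq_one_sub (s := {ω | R none ω = 0}) (hRMeas none (measurableSet_singleton 0)),
      hRDist, tsub_pos_iff_lt, ENNReal.ofReal_lt_one]
    simpa using pow_lt_one₀ (by linarith) (by linarith) (by omega : n ≠ 0)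
  have hsplit : P ({ω | R none ω ≠ 0} ∩ C) = P {ω | R none ω ≠ 0} * P C :=
    measure_inter_eq_mul_of_iIndepFun hRMeas hRIndep none (measurableSet_singleton 0).compl
      (measurableSet_genSize_ne_zero [] fun w _ => measurable_iSup_comap (by simp))
  calc 0 < P ({ω | R none ω ≠ 0} ∩ C) := by
        rw [hsplit]
        exact ENNReal.mul_pos hroot.ne' ((tsub_pos_of_lt hρ1).trans_le hC).ne'
    _ ≤ P (survival distFull none R) :=
        measure_mono fun ω ⟨h0, hω⟩ => cluster_infinite_of_genSize_ne_zero (R · ω) h0 0 hω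

/-- Cone percolation on `T_d` with binomial radius of influence,
`R ~ Binomial(n, p)`, i.e. `P[R = k] = C(n,k) p^k (1-p)^{n-k}` for `k = 0, …, n`,
`0 < p < 1`, `n ≥ 1`.  If `(p d + 1 - p)^n - (1 - p)^n > 1` then `P[V] > 0`. -/
theorem conePercolation_binomial_survives
    (d n : ℕ) (hd : 2 ≤ d) (hn : 1 ≤ n) (p : ℝ) (hp0 : 0 < p) (hp1 : p < 1)
    (Ω : Type*) [MeasurableSpace Ω] (P : Measure Ω) [IsProbabilityMeasure P]
    (R : TdVertex d → Ω → ℕ) (hRMeas : ∀ u, Measurable (R u))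
    (hRIndep : iIndepFun R P)
    (hRDist : ∀ u k, P {ω | R u ω = k}
      = ENNReal.ofReal ((n.choose k : ℝ) * p ^ k * (1 - p) ^ (n - k)))
    (hcrit : 1 < (p * (d : ℝ) + 1 - p) ^ n - (1 - p) ^ n) :
    0 < P (survival distFull (none : TdVertex d) R) :=
  conePercolation_binomial_survives_general d n hn p hp0 hp1 Ω P R hRMeas hRIndep hRDist hcrit
end
end

section
/- Consider the heterogeneous cone percolation process on T_d^+ in which all the radii are Bernoulli random variables: P[R_j = 1] = 1 − P[R_j = 0] for j = 0,1,2,.... If liminf_{j→∞} d · P[R_j = 1] > 1, then the process survives (the set I of reached vertices is infinite) with positive probability. -/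
/-!
A vertex of radius at least `1` passes the process on to all of its children, so a word all of
whose proper prefixes have radius at least `1` ("alive") is reached, and the process survives as
soon as there are alive words of every length. With `q j = P[R_j ≥ 1]` and
`M n = ∏_{j < n} d q j`, the number of alive words of length `n` has mean `M n`; grouping pairs
of words by the depth at which they part, its second moment is at most `M n ^ 2 * d ∑ₖ (M k)⁻¹`.
The series converges because `liminf d q j > 1`, so by the second moment method the probability
that an alive word of length `n` exists is bounded below uniformly in `n`.
-/

open MeasureTheory ProbabilityTheory Filter Set
open scoped ENNReal

noncomputable section

section Words

variable {α : Type*}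

theorem lcpLen_self_append [DecidableEq α] (l t : List α) : lcpLen l (l ++ t) = l.length := by
  induction l with
  | nil => rfl
  | cons a as ih => simp [lcpLen, ih]

theorem distPlus_self_append {d : ℕ} (u t : List (Fin d)) : distPlus u (u ++ t) = t.length := by
  simp [distPlus, lcpLen_self_append]

def properPrefixes [DecidableEq α] (w : List α) : Finset (List α) :=
  (Finset.range w.length).image w.take

theorem injOn_take (w : List α) : InjOn w.take (Iic w.length) := fun i hi j hj hij => by
  simpa [min_eq_left (mem_Iic.mp hi), min_eq_left (mem_Iic.mp hj)] using congrArg List.length hij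

theorem prod_image_take [DecidableEq α] {M : Type*} [CommMonoid M] (g : ℕ → M) (w : List α)
    {s : Finset ℕ} (hs : ∀ i ∈ s, i ≤ w.length) : ∏ u ∈ s.image w.take, g u.length = ∏ i ∈ s, g i := by
  rw [Finset.prod_image fun i hi j hj => injOn_take w (hs i hi) (hs j hj)]
  exact Finset.prod_congr rfl fun i hi => by rw [List.length_take, min_eq_left (hs i hi)]

theorem properPrefixes_take_subset [DecidableEq α] (w : List α) (m : ℕ) :
    properPrefixes (w.take m) ⊆ properPrefixes w := by
  intro u hu
  simp only [properPrefixes, Finset.mem_image, Finset.mem_range, List.length_take,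
    List.take_take] at hu ⊢
  obtain ⟨i, hi, rfl⟩ := hu
  exact ⟨min i m, by omega, rfl⟩

theorem ofFn_take_eq_ofFn_take_iff {n : ℕ} (f g : Fin n → α) (k : ℕ) :
    (List.ofFn f).take k = (List.ofFn g).take k ↔ ∀ i : Fin n, (i : ℕ) < k → f i = g i := by
  refine ⟨fun h i hi => ?_, fun h => ?_⟩
  · have hi' := List.getElem_of_eq h (i := i) (by simp; omega)
    simpa only [List.getElem_take, List.getElem_ofFn] using hi'
  · refine List.ext_getElem (by simp) fun i h1 _ => ?_
    simp only [List.length_take, List.length_ofFn, lt_min_iff] at h1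
    simpa using h ⟨i, h1.2⟩ h1.1

end Words

theorem mem_reachSet_of_one_le_take {d : ℕ} (r : List (Fin d) → ℕ) (w : List (Fin d))
    (h : ∀ i < w.length, 1 ≤ r (w.take i)) : w ∈ reachSet distPlus [] r w.length := by
  induction w using List.reverseRecOn with
  | nil => simp [reachSet]
  | append_singleton u a ih =>
    have hu : u ∈ reachSet distPlus [] r u.length := ih fun i hi => by
      simpa [List.take_append_of_le_length hi.le] using h i (by simp; omega)
    simp only [List.length_append, List.length_singleton, reachSet, mem_iUnion]
    refine ⟨u, hu, ?_⟩
    simpa [distPlus_self_append] using h u.length (by simp)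

section Alive

variable {α Ω : Type*}

theorem measure_biInter_preimage_Ici_one [MeasurableSpace Ω] {P : Measure Ω}
    {R : List α → Ω → ℕ} {q : ℕ → ℝ≥0∞} (hR : iIndepFun R P)
    (hq : ∀ u, P (R u ⁻¹' Ici 1) = q u.length) (s : Finset (List α)) :
    P (⋂ u ∈ s, R u ⁻¹' Ici 1) = ∏ u ∈ s, q u.length := by
  rw [hR.measure_inter_preimage_eq_mul s (sets := fun _ => Ici 1) fun _ _ => measurableSet_Ici]
  exact Finset.prod_congr rfl fun u _ => hq u

variable [DecidableEq α]

/-- On this event the process reaches `w` along the path from the root. -/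
def aliveEvent (R : List α → Ω → ℕ) (w : List α) : Set Ω :=
  ⋂ u ∈ properPrefixes w, R u ⁻¹' Ici 1

theorem aliveEvent_subset_take (R : List α → Ω → ℕ) (w : List α) (m : ℕ) :
    aliveEvent R w ⊆ aliveEvent R (w.take m) :=
  biInter_subset_biInter_left fun _ hu => properPrefixes_take_subset w m hu

variable [MeasurableSpace Ω]

theorem measurableSet_aliveEvent {R : List α → Ω → ℕ} (hR : ∀ u, Measurable (R u)) (w : List α) :
    MeasurableSet (aliveEvent R w) :=
  Finset.measurableSet_biInter _ fun u _ => hR u measurableSet_Ici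

variable {P : Measure Ω} {R : List α → Ω → ℕ} {q : ℕ → ℝ≥0∞}

theorem measure_aliveEvent (hR : iIndepFun R P) (hq : ∀ u, P (R u ⁻¹' Ici 1) = q u.length)
    (w : List α) : P (aliveEvent R w) = ∏ i ∈ Finset.range w.length, q i := by
  rw [aliveEvent, measure_biInter_preimage_Ici_one hR hq, properPrefixes,
    prod_image_take q w fun i hi => (Finset.mem_range.mp hi).le]

/-- The prefixes of `w` deeper than `k` are not prefixes of `v`, so their radii are independent
of the event that `v` is alive. -/
theorem measure_aliveEvent_inter_le (hR : iIndepFun R P)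
    (hq : ∀ u, P (R u ⁻¹' Ici 1) = q u.length) {v w : List α} {k : ℕ}
    (hk : ∀ j, k < j → j < w.length → v.take j ≠ w.take j) :
    P (aliveEvent R v ∩ aliveEvent R w) ≤
      (∏ i ∈ Finset.range v.length, q i) * ∏ i ∈ Finset.Ico (k + 1) w.length, q i := by
  set T := (Finset.Ico (k + 1) w.length).image w.take
  have hT : T ⊆ properPrefixes w :=
    Finset.image_subset_image fun j hj => Finset.mem_range.mpr (Finset.mem_Ico.mp hj).2
  have hdisj : Disjoint (properPrefixes v) T := by
    simp only [Finset.disjoint_left, properPrefixes, T, Finset.mem_image, Finset.mem_range,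
      Finset.mem_Ico]
    rintro _ ⟨i, hi, rfl⟩ ⟨j, ⟨hkj, hj⟩, hji⟩
    have hij : j = i := by simpa [hi.le, hj.le] using congrArg List.length hji
    exact hk j hkj hj (hij ▸ hji.symm)
  calc P (aliveEvent R v ∩ aliveEvent R w)
      ≤ P (⋂ u ∈ properPrefixes v ∪ T, R u ⁻¹' Ici 1) := by
        refine measure_mono fun ω hω => mem_iInter₂.mpr fun u hu => ?_
        rcases Finset.mem_union.mp hu with hu | hu
        · exact mem_iInter₂.mp hω.1 u hu
        · exact mem_iInter₂.mp hω.2 u (hT hu)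
    _ = (∏ u ∈ properPrefixes v, q u.length) * ∏ u ∈ T, q u.length := by
        rw [measure_biInter_preimage_Ici_one hR hq, Finset.prod_union hdisj]
    _ = _ := by
        rw [properPrefixes, prod_image_take q v fun i hi => (Finset.mem_range.mp hi).le,
          prod_image_take q w fun i hi => (Finset.mem_Ico.mp hi).2.le]

end Alive

section Counting

variable {α : Type*}

theorem exists_lt_forall_eq_and_take_ne {n : ℕ} (hn : 0 < n) (f g : Fin n → α) :
    ∃ k < n, (∀ i : Fin n, (i : ℕ) < k → g i = f i) ∧
      ∀ j, k < j → j < n → (List.ofFn f).take j ≠ (List.ofFn g).take j := by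
  classical
  set k := Nat.findGreatest (fun j => (List.ofFn f).take j = (List.ofFn g).take j) (n - 1)
  have hk : (List.ofFn f).take k = (List.ofFn g).take k :=
    Nat.findGreatest_spec (P := fun j => (List.ofFn f).take j = (List.ofFn g).take j)
      (Nat.zero_le _) rfl
  have hkn : k ≤ n - 1 := Nat.findGreatest_le _
  refine ⟨k, by omega,
    fun i hi => ((ofFn_take_eq_ofFn_take_iff f g k).mp hk i hi).symm,
    fun j hkj hj => Nat.findGreatest_is_greatest hkj (by omega)⟩

theorem card_filter_forall_lt_eq_le [Fintype α] [DecidableEq α] {n : ℕ} (f : Fin n → α) (k : ℕ) :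
    (Finset.univ.filter fun g : Fin n → α => ∀ i : Fin n, (i : ℕ) < k → g i = f i).card ≤
      Fintype.card α ^ (n - k) := by
  have hshift (j : Fin (n - k)) : k + j < n := by omega
  calc _ ≤ (Finset.univ : Finset (Fin (n - k) → α)).card := by
        refine Finset.card_le_card_of_injOn (fun g j => g ⟨k + j, hshift j⟩)
          (fun _ _ => Finset.mem_univ _) fun g hg g' hg' hgg' => funext fun i => ?_
        simp only [Finset.coe_filter, Finset.mem_univ, true_and, mem_ofPred_eq] at hg hg'
        by_cases hi : (i : ℕ) < k
        · rw [hg i hi, hg' i hi]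
        · simpa only [show k + (i - k) = i by omega] using congrFun hgg' ⟨i - k, by omega⟩
    _ = Fintype.card α ^ (n - k) := by simp

end Counting

section SecondMoment

variable {Ω : Type*} [MeasurableSpace Ω] {μ : Measure Ω}

theorem lintegral_sq_le_lintegral_sq_mul_measure {f : Ω → ℝ≥0∞} (hf : AEMeasurable f μ)
    {s : Set Ω} (hs : MeasurableSet s) (hfs : ∀ x ∉ s, f x = 0) :
    (∫⁻ x, f x ∂μ) ^ 2 ≤ (∫⁻ x, f x ^ 2 ∂μ) * μ s := by
  have hcs := ENNReal.lintegral_mul_norm_pow_le (hf.pow_const 2) (aemeasurable_one.indicator hs)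
    (g := s.indicator 1) (p := 2⁻¹) (q := 2⁻¹) (by norm_num) (by norm_num) (by norm_num)
  have hintegrand : ∀ x, (f x ^ 2) ^ (2⁻¹ : ℝ) * s.indicator 1 x ^ (2⁻¹ : ℝ) = f x := by
    intro x
    by_cases hx : x ∈ s
    · simpa [hx] using ENNReal.pow_rpow_inv_natCast two_ne_zero (f x)
    · simp [hx, hfs x hx]
  simp only [hintegrand, lintegral_indicator_one hs] at hcs
  rwa [← ENNReal.mul_rpow_of_nonneg _ _ (by norm_num), ENNReal.le_rpow_inv_iff two_pos,
    ENNReal.rpow_two] at hcs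

theorem sq_sum_measure_le_sum_sum_measure_inter_mul_measure_iUnion {ι : Type*} [Fintype ι]
    {A : ι → Set Ω} (hA : ∀ i, MeasurableSet (A i)) :
    (∑ i, μ (A i)) ^ 2 ≤ (∑ i, ∑ j, μ (A i ∩ A j)) * μ (⋃ i, A i) := by
  set X : Ω → ℝ≥0∞ := fun ω => ∑ i, (A i).indicator 1 ω
  have hX : Measurable X := Finset.measurable_sum _ fun i _ => measurable_one.indicator (hA i)
  have hXsq : ∀ ω, X ω ^ 2 = ∑ i, ∑ j, (A i ∩ A j).indicator 1 ω := fun ω => by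
    simp only [X, sq, Finset.sum_mul_sum, inter_indicator_one, Pi.mul_apply]
  have hXout : ∀ ω ∉ ⋃ i, A i, X ω = 0 := fun ω hω =>
    Finset.sum_eq_zero fun i _ => indicator_of_notMem (fun h => hω (mem_iUnion_of_mem i h)) _
  have h1 : ∫⁻ ω, X ω ∂μ = ∑ i, μ (A i) := by
    rw [lintegral_finsetSum _ fun i _ => measurable_one.indicator (hA i)]
    simp only [lintegral_indicator_one (hA _)]
  have h2 : ∫⁻ ω, X ω ^ 2 ∂μ = ∑ i, ∑ j, μ (A i ∩ A j) := by
    simp only [hXsq]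
    rw [lintegral_finsetSum _ fun i _ => Finset.measurable_sum _ fun j _ =>
      measurable_one.indicator ((hA i).inter (hA j))]
    refine Finset.sum_congr rfl fun i _ => ?_
    rw [lintegral_finsetSum _ fun j _ => measurable_one.indicator ((hA i).inter (hA j))]
    simp only [lintegral_indicator_one ((hA i).inter (hA _))]
  rw [← h1, ← h2]
  exact lintegral_sq_le_lintegral_sq_mul_measure hX.aemeasurable (MeasurableSet.iUnion hA) hXout

end SecondMoment

theorem tsum_inv_prod_range_ne_top {a : ℕ → ℝ≥0∞} (ha : ∀ j, a j ≠ 0)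
    (h : 1 < liminf a atTop) : ∑' k, (∏ j ∈ Finset.range k, a j)⁻¹ ≠ ⊤ := by
  obtain ⟨c, hc1, hc⟩ := exists_between h
  obtain ⟨J, hJ⟩ := eventually_atTop.mp (eventually_lt_of_lt_liminf hc)
  set M : ℕ → ℝ≥0∞ := fun k => ∏ j ∈ Finset.range k, a j
  have hM0 (k : ℕ) : M k ≠ 0 := Finset.prod_ne_zero_iff.mpr fun j _ => ha j
  have hc0 : c ≠ 0 := (zero_lt_one.trans hc1).ne'
  have hctop : c ≠ ⊤ := (hc.trans_le le_top).ne
  have hgrowth (i : ℕ) : M J * c ^ i ≤ M (i + J) := by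
    induction i with
    | zero => simp
    | succ i ih =>
      rw [pow_succ, ← mul_assoc, show i + 1 + J = (i + J) + 1 by omega]
      exact (mul_le_mul' ih (hJ _ (by omega)).le).trans_eq (Finset.prod_range_succ a _).symm
  have htail (i : ℕ) : (M (i + J))⁻¹ ≤ (M J)⁻¹ * c⁻¹ ^ i := by
    rw [← ENNReal.inv_pow,
      ← ENNReal.mul_inv (.inr (ENNReal.pow_ne_top hctop)) (.inr (pow_ne_zero _ hc0))]
    exact ENNReal.inv_le_inv.mpr (hgrowth i)
  rw [← ENNReal.summable.sum_add_tsum_nat_add' (k := J)]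
  refine ENNReal.add_ne_top.mpr ⟨ENNReal.sum_ne_top.mpr fun k _ => ENNReal.inv_ne_top.mpr (hM0 k),
    ne_top_of_le_ne_top ?_ (ENNReal.tsum_le_tsum htail)⟩
  rw [ENNReal.tsum_mul_left, ENNReal.tsum_geometric]
  exact ENNReal.mul_ne_top (ENNReal.inv_ne_top.mpr (hM0 J))
    (ENNReal.inv_ne_top.mpr (tsub_pos_of_lt (ENNReal.inv_lt_one.mpr hc1)).ne')

theorem pow_mul_prod_Ico_eq {D : ℝ≥0∞} {q : ℕ → ℝ≥0∞} {k n : ℕ} (hkn : k < n)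
    (h0 : ∏ i ∈ Finset.range (k + 1), D * q i ≠ 0)
    (htop : ∏ i ∈ Finset.range (k + 1), D * q i ≠ ⊤) :
    D ^ (n - k) * ∏ i ∈ Finset.Ico (k + 1) n, q i =
      D * (∏ i ∈ Finset.range n, D * q i) * (∏ i ∈ Finset.range (k + 1), D * q i)⁻¹ := by
  rw [← Finset.prod_range_mul_prod_Ico _ (show k + 1 ≤ n by omega), mul_comm (∏ i ∈ _, _),
    mul_assoc D, mul_assoc, ENNReal.mul_inv_cancel h0 htop, mul_one, Finset.prod_mul_distrib,
    Finset.prod_const, Nat.card_Ico, ← mul_assoc, ← pow_succ',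
    show n - (k + 1) + 1 = n - k by omega]

section AliveWords

variable {α Ω : Type*} [Fintype α] [DecidableEq α] [MeasurableSpace Ω] {P : Measure Ω}
  {R : List α → Ω → ℕ} {q : ℕ → ℝ≥0∞}

theorem sum_measure_aliveEvent_inter_le (hR : iIndepFun R P)
    (hq : ∀ u, P (R u ⁻¹' Ici 1) = q u.length) {n : ℕ} (hn : 0 < n) (f : Fin n → α) :
    ∑ g : Fin n → α, P (aliveEvent R (List.ofFn f) ∩ aliveEvent R (List.ofFn g)) ≤
      ∑ k ∈ Finset.range n, (Fintype.card α : ℝ≥0∞) ^ (n - k) *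
        ((∏ i ∈ Finset.range n, q i) * ∏ i ∈ Finset.Ico (k + 1) n, q i) := by
  set c : ℕ → ℝ≥0∞ := fun k => (∏ i ∈ Finset.range n, q i) * ∏ i ∈ Finset.Ico (k + 1) n, q i
  set agree : ℕ → (Fin n → α) → Prop := fun k g => ∀ i : Fin n, (i : ℕ) < k → g i = f i
  calc ∑ g, P (aliveEvent R (List.ofFn f) ∩ aliveEvent R (List.ofFn g))
      ≤ ∑ g, ∑ k ∈ Finset.range n, if agree k g then c k else 0 := by
        refine Finset.sum_le_sum fun g _ => ?_
        obtain ⟨k, hkn, hagree, hne⟩ := exists_lt_forall_eq_and_take_ne hn f g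
        calc P (aliveEvent R (List.ofFn f) ∩ aliveEvent R (List.ofFn g))
            ≤ c k := by
              simpa using measure_aliveEvent_inter_le hR hq (v := List.ofFn f) (w := List.ofFn g)
                (by simpa using hne)
          _ = if agree k g then c k else 0 := (if_pos hagree).symm
          _ ≤ _ := Finset.single_le_sum (f := fun k => if agree k g then c k else 0)
              (fun _ _ => zero_le) (Finset.mem_range.mpr hkn)
    _ = ∑ k ∈ Finset.range n, (Finset.univ.filter (agree k)).card * c k := by
        rw [Finset.sum_comm]
        simp only [← Finset.sum_filter, Finset.sum_const, nsmul_eq_mul]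
    _ ≤ _ := Finset.sum_le_sum fun k _ =>
        mul_le_mul_left (by exact_mod_cast card_filter_forall_lt_eq_le f k) _

theorem sum_measure_aliveEvent (hR : iIndepFun R P) (hq : ∀ u, P (R u ⁻¹' Ici 1) = q u.length)
    (n : ℕ) : ∑ f : Fin n → α, P (aliveEvent R (List.ofFn f)) =
      ∏ i ∈ Finset.range n, (Fintype.card α : ℝ≥0∞) * q i := by
  simp [measure_aliveEvent hR hq, Finset.prod_mul_distrib]

theorem sum_sum_measure_aliveEvent_inter_le (hR : iIndepFun R P)
    (hq : ∀ u, P (R u ⁻¹' Ici 1) = q u.length) (hq0 : ∀ j, (Fintype.card α : ℝ≥0∞) * q j ≠ 0)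
    (hqtop : ∀ j, q j ≠ ⊤) {n : ℕ} (hn : 0 < n) :
    ∑ f : Fin n → α, ∑ g : Fin n → α,
        P (aliveEvent R (List.ofFn f) ∩ aliveEvent R (List.ofFn g)) ≤
      (∏ i ∈ Finset.range n, (Fintype.card α : ℝ≥0∞) * q i) ^ 2 *
        ((Fintype.card α : ℝ≥0∞) *
          ∑' k, (∏ i ∈ Finset.range k, (Fintype.card α : ℝ≥0∞) * q i)⁻¹) := by
  set D : ℝ≥0∞ := (Fintype.card α : ℝ≥0∞)
  set M : ℕ → ℝ≥0∞ := fun k => ∏ i ∈ Finset.range k, D * q i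
  have hM0 (k : ℕ) : M k ≠ 0 := Finset.prod_ne_zero_iff.mpr fun j _ => hq0 j
  have hMtop (k : ℕ) : M k ≠ ⊤ :=
    ENNReal.prod_ne_top fun j _ => ENNReal.mul_ne_top (ENNReal.natCast_ne_top _) (hqtop j)
  have hsum : ∑ k ∈ Finset.range n, (M (k + 1))⁻¹ ≤ ∑' k, (M k)⁻¹ :=
    le_self_add.trans_eq (Finset.sum_range_succ' _ n).symm |>.trans (ENNReal.sum_le_tsum _)
  calc ∑ f : Fin n → α, ∑ g : Fin n → α,
        P (aliveEvent R (List.ofFn f) ∩ aliveEvent R (List.ofFn g))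
      ≤ ∑ f : Fin n → α, ∑ k ∈ Finset.range n,
          D ^ (n - k) * ((∏ i ∈ Finset.range n, q i) * ∏ i ∈ Finset.Ico (k + 1) n, q i) :=
        Finset.sum_le_sum fun f _ => sum_measure_aliveEvent_inter_le hR hq hn f
    _ = ∑ f : Fin n → α, P (aliveEvent R (List.ofFn f)) *
          (D * M n * ∑ k ∈ Finset.range n, (M (k + 1))⁻¹) := by
        refine Finset.sum_congr rfl fun f _ => ?_
        rw [measure_aliveEvent hR hq, List.length_ofFn, Finset.mul_sum, Finset.mul_sum]
        refine Finset.sum_congr rfl fun k hk => ?_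
        rw [mul_left_comm, pow_mul_prod_Ico_eq (Finset.mem_range.mp hk) (hM0 _) (hMtop _)]
    _ = M n ^ 2 * (D * ∑ k ∈ Finset.range n, (M (k + 1))⁻¹) := by
        rw [← Finset.sum_mul, sum_measure_aliveEvent hR hq]
        ring
    _ ≤ M n ^ 2 * (D * ∑' k, (M k)⁻¹) := by gcongr

theorem inv_le_measure_iUnion_aliveEvent (hRm : ∀ u, Measurable (R u)) (hR : iIndepFun R P)
    (hq : ∀ u, P (R u ⁻¹' Ici 1) = q u.length) (hq0 : ∀ j, (Fintype.card α : ℝ≥0∞) * q j ≠ 0)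
    (hqtop : ∀ j, q j ≠ ⊤) {n : ℕ} (hn : 0 < n) :
    ((Fintype.card α : ℝ≥0∞) * ∑' k, (∏ i ∈ Finset.range k, (Fintype.card α : ℝ≥0∞) * q i)⁻¹)⁻¹ ≤
      P (⋃ f : Fin n → α, aliveEvent R (List.ofFn f)) := by
  set M := ∏ i ∈ Finset.range n, (Fintype.card α : ℝ≥0∞) * q i
  have hM0 : M ^ 2 ≠ 0 := pow_ne_zero _ (Finset.prod_ne_zero_iff.mpr fun j _ => hq0 j)
  have hMtop : M ^ 2 ≠ ⊤ := ENNReal.pow_ne_top <|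
    ENNReal.prod_ne_top fun j _ => ENNReal.mul_ne_top (ENNReal.natCast_ne_top _) (hqtop j)
  have hsecond := sq_sum_measure_le_sum_sum_measure_inter_mul_measure_iUnion (μ := P)
    (A := fun f : Fin n → α => aliveEvent R (List.ofFn f)) fun f => measurableSet_aliveEvent hRm _
  rw [sum_measure_aliveEvent hR hq] at hsecond
  have := hsecond.trans (mul_le_mul_left (sum_sum_measure_aliveEvent_inter_le hR hq hq0 hqtop hn) _)
  rw [← one_div]
  refine ENNReal.div_le_of_le_mul' ?_
  rwa [← ENNReal.mul_le_mul_iff_right hM0 hMtop, mul_one, ← mul_assoc]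

end AliveWords

theorem antitone_iUnion_aliveEvent {α Ω : Type*} [DecidableEq α] (R : List α → Ω → ℕ) :
    Antitone fun n => ⋃ f : Fin n → α, aliveEvent R (List.ofFn f) :=
  antitone_nat_of_succ_le fun n => iUnion_subset fun f =>
    subset_iUnion_of_subset (Fin.take n n.le_succ f) <| by
      rw [Fin.ofFn_take_eq_take_ofFn]
      exact aliveEvent_subset_take R _ n

theorem iInter_iUnion_aliveEvent_subset_survival {d : ℕ} {Ω : Type*} (R : List (Fin d) → Ω → ℕ) :
    ⋂ n, ⋃ f : Fin n → Fin d, aliveEvent R (List.ofFn f) ⊆ survival distPlus [] R := by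
  intro ω hω
  have hreach (n : ℕ) : ∃ w ∈ cluster distPlus [] (fun u => R u ω), w.length = n := by
    obtain ⟨f, hf⟩ := mem_iUnion.mp (mem_iInter.mp hω n)
    refine ⟨List.ofFn f, mem_iUnion_of_mem _ (mem_reachSet_of_one_le_take _ _ fun i hi => ?_),
      List.length_ofFn⟩
    exact mem_iInter₂.mp hf _ (Finset.mem_image_of_mem _ (Finset.mem_range.mpr hi))
  choose w hw hlen using hreach
  exact infinite_of_injective_forall_mem
    (fun m n h => by simpa [hlen] using congrArg List.length h) hw

theorem le_measure_survival {d : ℕ} {Ω : Type*} [MeasurableSpace Ω] {P : Measure Ω}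
    [IsFiniteMeasure P] {R : List (Fin d) → Ω → ℕ} (hRm : ∀ u, Measurable (R u)) {c : ℝ≥0∞}
    (hc : ∀ n, 0 < n → c ≤ P (⋃ f : Fin n → Fin d, aliveEvent R (List.ofFn f))) :
    c ≤ P (survival distPlus [] R) :=
  calc c ≤ ⨅ n, P (⋃ f : Fin n → Fin d, aliveEvent R (List.ofFn f)) := le_iInf fun n =>
        (hc (n + 1) n.succ_pos).trans (measure_mono (antitone_iUnion_aliveEvent R n.le_succ))
    _ = P (⋂ n, ⋃ f : Fin n → Fin d, aliveEvent R (List.ofFn f)) :=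
      ((antitone_iUnion_aliveEvent R).measure_iInter (fun _ => (MeasurableSet.iUnion fun _ =>
        measurableSet_aliveEvent hRm _).nullMeasurableSet) ⟨0, measure_ne_top _ _⟩).symm
    _ ≤ P (survival distPlus [] R) := measure_mono (iInter_iUnion_aliveEvent_subset_survival R)

theorem heterogeneousConePercolation_bernoulli_survives_general
    (d : ℕ) (ν : ℕ → Measure ℕ) [∀ z, IsProbabilityMeasure (ν z)]
    (hν : ∀ z, ν z {0} < 1)
    (Ω : Type*) [MeasurableSpace Ω] (P : Measure Ω) [IsProbabilityMeasure P]
    (R : List (Fin d) → Ω → ℕ) (hRMeas : ∀ u, Measurable (R u))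
    (hRIndep : iIndepFun R P)
    (hRDist : ∀ u, Measure.map (R u) P = ν u.length)
    (hliminf : 1 < Filter.liminf (fun j : ℕ => (d : ℝ≥0∞) * ν j {1}) Filter.atTop) :
    0 < P (survival distPlus ([] : List (Fin d)) R) := by
  set q : ℕ → ℝ≥0∞ := fun j => ν j (Ici 1)
  have hq (u : List (Fin d)) : P (R u ⁻¹' Ici 1) = q u.length := by
    rw [← Measure.map_apply (hRMeas u) measurableSet_Ici, hRDist]
  have hd : (d : ℝ≥0∞) ≠ 0 := by
    rintro hd
    simp [hd] at hliminf
  have hq0 (j : ℕ) : (Fintype.card (Fin d) : ℝ≥0∞) * q j ≠ 0 := by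
    have hcompl : (Ici 1 : Set ℕ) = {0}ᶜ := by ext; simp [Nat.one_le_iff_ne_zero]
    simpa [q, hcompl, prob_compl_eq_one_sub (measurableSet_singleton 0), hd] using
      (tsub_pos_of_lt (hν j)).ne'
  have hliminf' : 1 < liminf (fun j => (Fintype.card (Fin d) : ℝ≥0∞) * q j) atTop := by
    refine hliminf.trans_le (liminf_le_liminf (.of_forall fun j => ?_))
    simpa using mul_le_mul_right (measure_mono (by simp) : ν j {1} ≤ q j) _
  have hK := ENNReal.mul_ne_top (ENNReal.natCast_ne_top (Fintype.card (Fin d)))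
    (tsum_inv_prod_range_ne_top hq0 hliminf')
  exact (ENNReal.inv_pos.mpr hK).trans_le <| le_measure_survival hRMeas fun n hn =>
    inv_le_measure_iUnion_aliveEvent hRMeas hRIndep hq hq0 (fun j => measure_ne_top _ _) hn

/-- Heterogeneous cone percolation on `T_d^+` in which all the radii
are Bernoulli random variables: the radius of a vertex at distance `z` from the root
has law `ν z`, concentrated on `{0, 1}`.  If `liminf_{j→∞} d · P[R_j = 1] > 1`, then
the set of reached vertices is infinite with positive probability. -/
theorem heterogeneousConePercolation_bernoulli_survives
    (d : ℕ) (hd : 2 ≤ d) (ν : ℕ → Measure ℕ) [∀ z, IsProbabilityMeasure (ν z)]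
    (hν : ∀ z, ν z {0} < 1)
    (hBernoulli : ∀ z, ν z {0} + ν z {1} = 1)
    (Ω : Type*) [MeasurableSpace Ω] (P : Measure Ω) [IsProbabilityMeasure P]
    (R : List (Fin d) → Ω → ℕ) (hRMeas : ∀ u, Measurable (R u))
    (hRIndep : iIndepFun R P)
    (hRDist : ∀ u, Measure.map (R u) P = ν u.length)
    (hliminf : 1 < Filter.liminf (fun j : ℕ => (d : ℝ≥0∞) * ν j {1}) Filter.atTop) :
    0 < P (survival distPlus ([] : List (Fin d)) R) :=
  heterogeneousConePercolation_bernoulli_survives_general d ν hν Ω P R hRMeas hRIndep hRDist hliminf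
end
end
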